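/- arXiv:2410.02321 — 10 statements merged into one kernel-verified Lean document; each statement's English description precedes it below -/
import Mathlib

section
/- For every τ ≥ 0 and all x, y ∈ X, the matrix exponential of τQ satisfies entrywise exp(τQ)(x,y) = ∏_{i=1}^{d} [ (1/S)·(1 − e^{−τ}) + e^{−τ}·δ{x^i, y^i} ], where δ{a,b} = 1 if a = b and 0 otherwise. In particular, the forward marginal satisfies q_t(y) = ∑_{x∈X} p_data(x)·∏_{i=1}^{d} [ (1/S)·(1 − e^{−t}) + e^{−t}·δ{x^i, y^i} ] for every t ≥ 0 and y ∈ X. -/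
open scoped BigOperators Nat
open NormedSpace

/-- Hamming distance on `[S]^d`. -/
def Ham {S d : ℕ} (x y : Fin d → Fin S) : ℕ :=
  (Finset.univ.filter fun i => x i ≠ y i).card

/-- The forward rate matrix `Q` on `X = [S]^d`. -/
noncomputable def Qmat (S d : ℕ) : Matrix (Fin d → Fin S) (Fin d → Fin S) ℝ :=
  fun x y =>
    if x = y then (1 / (S : ℝ) - 1) * d
    else if Ham x y = 1 then 1 / (S : ℝ) else 0

/-- The forward marginal `q_t = exp(tQ)·p_data`. -/
noncomputable def qmarg (S d : ℕ) (p : (Fin d → Fin S) → ℝ) (t : ℝ) :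
    (Fin d → Fin S) → ℝ :=
  (NormedSpace.exp (t • Qmat S d)).mulVec p


/-- The single-coordinate averaging matrix. -/
noncomputable def Pmat (S d : ℕ) (i : Fin d) :
    Matrix (Fin d → Fin S) (Fin d → Fin S) ℝ :=
  fun x y => if ∀ j, j ≠ i → x j = y j then 1 / (S : ℝ) else 0

/-- Sums over `X` of functions supported on "agrees with x off i". -/
lemma sum_eq_sum_update {S d : ℕ} (x : Fin d → Fin S) (i : Fin d)
    (g : (Fin d → Fin S) → ℝ)
    (hg : ∀ z, ¬(∀ j, j ≠ i → z j = x j) → g z = 0) :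
    ∑ z, g z = ∑ c : Fin S, g (Function.update x i c) := by
  classical
  have hinj : ∀ a ∈ (Finset.univ : Finset (Fin S)), ∀ b ∈ Finset.univ,
      Function.update x i a = Function.update x i b → a = b := by
    intro a _ b _ hab
    have := congrFun hab i
    simpa using this
  have h1 : ∑ c : Fin S, g (Function.update x i c)
      = ∑ z ∈ Finset.image (fun c => Function.update x i c) Finset.univ, g z :=
    (Finset.sum_image hinj).symm
  rw [h1]
  refine (Finset.sum_subset (Finset.subset_univ _) ?_).symm
  intro z _ hz
  refine hg z fun h => hz ?_
  refine Finset.mem_image.2 ⟨z i, Finset.mem_univ _, ?_⟩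
  funext j
  by_cases hj : j = i
  · subst hj; simp
  · rw [Function.update_of_ne hj, (h j hj).symm]

lemma Pmat_idem {S d : ℕ} (i : Fin d) :
    Pmat S d i * Pmat S d i = Pmat S d i := by
  funext x y
  rw [Matrix.mul_apply]
  have hvan : ∀ z, ¬(∀ j, j ≠ i → z j = x j) →
      Pmat S d i x z * Pmat S d i z y = 0 := by
    intro z hz
    have h : ¬ ∀ j, j ≠ i → x j = z j := fun h => hz fun j hj => (h j hj).symm
    simp [Pmat, h]
  rw [sum_eq_sum_update x i _ hvan]
  have h1 : ∀ c : Fin S, Pmat S d i x (Function.update x i c) = 1 / S := by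
    intro c
    have h : ∀ j, j ≠ i → x j = Function.update x i c j := by
      intro j hj; rw [Function.update_of_ne hj]
    simp only [Pmat]
    rw [if_pos h]
  have h2 : ∀ c : Fin S, Pmat S d i (Function.update x i c) y = Pmat S d i x y := by
    intro c
    have hiff : (∀ j, j ≠ i → Function.update x i c j = y j) ↔ (∀ j, j ≠ i → x j = y j) := by
      constructor <;> intro h j hj
      · rw [← h j hj, Function.update_of_ne hj]
      · rw [Function.update_of_ne hj]; exact h j hj
    simp only [Pmat]
    rw [if_congr hiff rfl rfl]
  simp only [h1, h2]
  rw [Finset.sum_const, Finset.card_univ, Fintype.card_fin, nsmul_eq_mul]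
  unfold Pmat
  by_cases hc : ∀ j, j ≠ i → x j = y j <;> simp [hc]
  · field_simp

lemma Pmat_mul_apply {S d : ℕ} {i j : Fin d} (hij : i ≠ j) (x y : Fin d → Fin S) :
    (Pmat S d i * Pmat S d j) x y =
      if ∀ k, k ≠ i → k ≠ j → x k = y k then 1 / (S : ℝ) * (1 / S) else 0 := by
  rw [Matrix.mul_apply]
  have hvan : ∀ z, ¬(∀ k, k ≠ i → z k = x k) →
      Pmat S d i x z * Pmat S d j z y = 0 := by
    intro z hz
    have h : ¬ ∀ k, k ≠ i → x k = z k := fun h => hz fun k hk => (h k hk).symm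
    simp [Pmat, h]
  rw [sum_eq_sum_update x i _ hvan]
  have h1 : ∀ c : Fin S, Pmat S d i x (Function.update x i c) = 1 / S := by
    intro c
    have h : ∀ k, k ≠ i → x k = Function.update x i c k := by
      intro k hk; rw [Function.update_of_ne hk]
    simp only [Pmat]
    rw [if_pos h]
  have h2 : ∀ c : Fin S, Pmat S d j (Function.update x i c) y =
      if c = y i ∧ ∀ k, k ≠ i → k ≠ j → x k = y k then 1 / (S : ℝ) else 0 := by
    intro c
    have hiff : (∀ k, k ≠ j → Function.update x i c k = y k) ↔
        (c = y i ∧ ∀ k, k ≠ i → k ≠ j → x k = y k) := by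
      constructor
      · intro h
        refine ⟨?_, fun k hki hkj => ?_⟩
        · have := h i hij
          rwa [Function.update_self] at this
        · have := h k hkj
          rwa [Function.update_of_ne hki] at this
      · rintro ⟨hc, h⟩ k hkj
        by_cases hki : k = i
        · subst hki; rw [Function.update_self]; exact hc
        · rw [Function.update_of_ne hki]; exact h k hki hkj
    simp only [Pmat]
    rw [if_congr hiff rfl rfl]
  simp only [h1, h2]
  by_cases hC : ∀ k, k ≠ i → k ≠ j → x k = y k
  · rw [if_pos hC]
    have hterm : ∀ c : Fin S, (1/(S:ℝ)) *
        (if c = y i ∧ ∀ k, k ≠ i → k ≠ j → x k = y k then 1/(S:ℝ) else 0)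
        = if c = y i then 1/(S:ℝ)*(1/S) else 0 := by
      intro c
      rw [if_congr (and_iff_left hC) rfl rfl, mul_ite, mul_zero]
    rw [Finset.sum_congr rfl fun c _ => hterm c]
    rw [Finset.sum_ite_eq' Finset.univ (y i) fun _ => 1/(S:ℝ)*(1/S)]
    simp
  · rw [if_neg hC]
    rw [Finset.sum_congr rfl (fun c _ => ?_), Finset.sum_const, smul_zero]
    have : ¬ (c = y i ∧ ∀ k, k ≠ i → k ≠ j → x k = y k) := fun h => hC h.2
    rw [if_neg this, mul_zero]

lemma Pmat_comm {S d : ℕ} (i j : Fin d) : Commute (Pmat S d i) (Pmat S d j) := by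
  rcases eq_or_ne i j with rfl | hij
  · exact Commute.refl _
  · show _ = _
    funext x y
    rw [Pmat_mul_apply hij, Pmat_mul_apply hij.symm]
    exact if_congr ⟨fun h k h1 h2 => h k h2 h1, fun h k h1 h2 => h k h2 h1⟩ rfl rfl

lemma Qmat_eq_sum {S d : ℕ} : Qmat S d = ∑ i : Fin d, (Pmat S d i - 1) := by
  funext x y
  rw [Matrix.sum_apply]
  simp only [Matrix.sub_apply, Matrix.one_apply, Pmat]
  by_cases hxy : x = y
  · subst hxy
    have hterm : ∀ i : Fin d,
        ((if ∀ j, j ≠ i → x j = x j then 1/(S:ℝ) else 0) - (if x = x then 1 else 0))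
          = 1/(S:ℝ) - 1 := by
      intro i
      rw [if_pos (fun j _ => rfl), if_pos rfl]
    rw [Finset.sum_congr rfl fun i _ => hterm i, Finset.sum_const, Finset.card_univ,
      Fintype.card_fin, nsmul_eq_mul]
    simp [Qmat, mul_comm]
  · rw [Finset.sum_congr rfl fun i _ => (by rw [if_neg hxy, sub_zero] :
      ((if ∀ j, j ≠ i → x j = y j then 1/(S:ℝ) else 0) - (if x = y then 1 else 0))
        = (if ∀ j, j ≠ i → x j = y j then 1/(S:ℝ) else 0))]
    by_cases hham : Ham x y = 1
    · obtain ⟨i₀, hi₀⟩ := Finset.card_eq_one.mp hham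
      have hmem : ∀ j : Fin d, x j ≠ y j ↔ j = i₀ := by
        intro j
        rw [← Finset.mem_singleton, ← hi₀, Finset.mem_filter]
        simp
      have hcond : ∀ i : Fin d, (∀ j, j ≠ i → x j = y j) ↔ i = i₀ := by
        intro i
        constructor
        · intro h
          by_contra hne
          have hx : x i₀ = y i₀ := h i₀ (fun he => hne he.symm)
          exact ((hmem i₀).mpr rfl) hx
        · rintro rfl j hj
          by_contra hne
          exact hj ((hmem j).mp hne)
      rw [Finset.sum_congr rfl fun i _ => if_congr (hcond i) rfl rfl]
      rw [Finset.sum_ite_eq' Finset.univ i₀ fun _ => 1/(S:ℝ)]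
      simp [Qmat, hxy, hham]
    · have hcond : ∀ i : Fin d, ¬ (∀ j, j ≠ i → x j = y j) := by
        intro i h
        apply hham
        have hsub : (Finset.univ.filter fun j => x j ≠ y j) ⊆ {i} := by
          intro j hj
          rw [Finset.mem_filter] at hj
          rw [Finset.mem_singleton]
          by_contra hne
          exact hj.2 (h j hne)
        have hne : (Finset.univ.filter fun j => x j ≠ y j).Nonempty := by
          obtain ⟨j, hj⟩ := Function.ne_iff.mp hxy
          exact ⟨j, Finset.mem_filter.2 ⟨Finset.mem_univ _, hj⟩⟩
        unfold Ham
        have h1 : (Finset.univ.filter fun j => x j ≠ y j).card ≤ 1 := by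
          simpa using Finset.card_le_card hsub
        have h2 : 1 ≤ (Finset.univ.filter fun j => x j ≠ y j).card :=
          Finset.card_pos.mpr hne
        omega
      rw [Finset.sum_congr rfl fun i _ => if_neg (hcond i), Finset.sum_const, smul_zero]
      simp [Qmat, hxy, hham]

/-- exp of τ•B when B² = -B. -/
lemma exp_smul_of_sq_neg {𝔸 : Type*} [NormedRing 𝔸] [NormedAlgebra ℝ 𝔸] [CompleteSpace 𝔸]
    (B : 𝔸) (hB : B * B = -B) (τ : ℝ) :
    exp (τ • B) = 1 + (1 - Real.exp (-τ)) • B := by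
  have hpow : ∀ n : ℕ, B ^ (n + 1) = ((-1 : ℝ) ^ n) • B := by
    intro n
    induction n with
    | zero => simp
    | succ k ih =>
      rw [pow_succ, ih, smul_mul_assoc, hB, smul_neg, pow_succ, mul_neg_one, neg_smul]
  have hterm : ∀ n : ℕ, ((n ! : ℝ)⁻¹) • (τ • B) ^ n = (τ ^ n / n !) • B ^ n := by
    intro n
    rw [smul_pow, smul_smul, div_eq_inv_mul, mul_comm ((n ! : ℝ))⁻¹ (τ ^ n)]
  have hsum : Summable fun n : ℕ => ((n ! : ℝ)⁻¹) • (τ • B) ^ n :=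
    expSeries_summable' (𝕂 := ℝ) (τ • B)
  rw [exp_eq_tsum ℝ]
  beta_reduce
  rw [Summable.tsum_eq_zero_add hsum]
  simp only [hterm]
  have h0 : (τ ^ 0 / (0:ℕ)! : ℝ) • (B ^ 0) = 1 := by norm_num
  have hshift : ∀ n : ℕ, (τ ^ (n+1) / (n+1)! : ℝ) • B ^ (n+1)
      = (-((-τ) ^ (n+1) / (n+1)!)) • B := by
    intro n
    rw [hpow, smul_smul]
    congr 1
    rw [neg_pow τ]
    ring
  have hsum2 : Summable fun n : ℕ => (-((-τ) ^ (n+1) / ((n+1)! : ℝ))) := by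
    apply Summable.neg
    exact (Real.summable_pow_div_factorial (-τ)).comp_injective (add_left_injective 1)
  have htail : ∑' n : ℕ, (τ ^ (n+1) / ((n+1)! : ℝ)) • B ^ (n+1) = (1 - Real.exp (-τ)) • B := by
    rw [tsum_congr hshift, Summable.tsum_smul_const hsum2]
    congr 1
    rw [tsum_neg]
    have hexp : Real.exp (-τ) = ∑' n : ℕ, (-τ) ^ n / n ! := by
      rw [Real.exp_eq_exp_ℝ, exp_eq_tsum_div]
    have := Summable.tsum_eq_zero_add (Real.summable_pow_div_factorial (-τ))
    rw [← hexp] at this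
    simp at this ⊢
    linarith
  rw [h0, htail]

lemma Nmat_sq {S d : ℕ} (i : Fin d) :
    (Pmat S d i - 1) * (Pmat S d i - 1) = -(Pmat S d i - 1) := by
  have h : (Pmat S d i - 1) * (Pmat S d i - 1)
      = Pmat S d i * Pmat S d i - Pmat S d i - Pmat S d i + 1 := by noncomm_ring
  rw [h, Pmat_idem]
  noncomm_ring

lemma exp_Nmat {S d : ℕ} (τ : ℝ) (i : Fin d) :
    exp (τ • (Pmat S d i - 1)) = 1 + (1 - Real.exp (-τ)) • (Pmat S d i - 1) := by
  letI : SeminormedRing (Matrix (Fin d → Fin S) (Fin d → Fin S) ℝ) :=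
    Matrix.linftyOpSemiNormedRing
  letI : NormedRing (Matrix (Fin d → Fin S) (Fin d → Fin S) ℝ) :=
    Matrix.linftyOpNormedRing
  letI : NormedAlgebra ℝ (Matrix (Fin d → Fin S) (Fin d → Fin S) ℝ) :=
    Matrix.linftyOpNormedAlgebra
  exact exp_smul_of_sq_neg _ (Nmat_sq i) τ

lemma exp_Nmat_apply {S d : ℕ} (τ : ℝ) (i : Fin d) (x y : Fin d → Fin S) :
    exp (τ • (Pmat S d i - 1)) x y =
      if ∀ j, j ≠ i → x j = y j then
        (1 / (S : ℝ)) * (1 - Real.exp (-τ)) +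
          Real.exp (-τ) * (if x i = y i then 1 else 0)
      else 0 := by
  rw [exp_Nmat]
  simp only [Matrix.add_apply, Matrix.smul_apply, Matrix.sub_apply, Matrix.one_apply, Pmat,
    smul_eq_mul]
  by_cases hc : ∀ j, j ≠ i → x j = y j
  · rw [if_pos hc, if_pos hc]
    by_cases hi : x i = y i
    · have hxy : x = y := by
        funext j
        by_cases hj : j = i
        · subst hj; exact hi
        · exact hc j hj
      rw [if_pos hxy, if_pos hi]
      ring
    · have hxy : x ≠ y := fun h => hi (congrFun h i)
      rw [if_neg hxy, if_neg hi]
      ring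
  · rw [if_neg hc, if_neg hc]
    have hxy : x ≠ y := by
      intro h; subst h; exact hc fun j _ => rfl
    rw [if_neg hxy]
    ring

lemma noncommProd_exp_apply {S d : ℕ} (τ : ℝ) :
    ∀ (s : Finset (Fin d)) (hc : (s : Set (Fin d)).Pairwise
      (Function.onFun Commute fun i => exp (τ • (Pmat S d i - 1)))),
    ∀ (x y : Fin d → Fin S),
    s.noncommProd (fun i => exp (τ • (Pmat S d i - 1))) hc x y =
      if ∀ j, j ∉ s → x j = y j then
        ∏ i ∈ s, ((1 / (S : ℝ)) * (1 - Real.exp (-τ)) +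
          Real.exp (-τ) * (if x i = y i then 1 else 0))
      else 0 := by
  intro s
  induction s using Finset.induction_on with
  | empty =>
    intro hc x y
    rw [Finset.noncommProd_empty, Finset.prod_empty, Matrix.one_apply]
    exact if_congr ⟨fun h j _ => congrFun h j, fun h => funext fun j => h j (by simp)⟩ rfl rfl
  | @insert a s ha ih =>
    intro hc x y
    rw [Finset.noncommProd_insert_of_notMem _ _ _ _ ha, Matrix.mul_apply]
    have hvan : ∀ z, ¬(∀ j, j ≠ a → z j = x j) →
        exp (τ • (Pmat S d a - 1)) x z *
          (s.noncommProd (fun i => exp (τ • (Pmat S d i - 1)))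
            (hc.mono fun _ => Finset.mem_insert_of_mem) z y) = 0 := by
      intro z hz
      have h : ¬ ∀ j, j ≠ a → x j = z j := fun h => hz fun j hj => (h j hj).symm
      rw [exp_Nmat_apply, if_neg h, zero_mul]
    rw [sum_eq_sum_update x a _ hvan]
    have hupd : ∀ c : Fin S, ∀ j, j ≠ a → x j = Function.update x a c j := by
      intro c j hj; rw [Function.update_of_ne hj]
    have h1 : ∀ c : Fin S, exp (τ • (Pmat S d a - 1)) x (Function.update x a c)
        = (1 / (S : ℝ)) * (1 - Real.exp (-τ)) +
          Real.exp (-τ) * (if x a = c then 1 else 0) := by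
      intro c
      rw [exp_Nmat_apply, if_pos (hupd c), Function.update_self]
    have h2 : ∀ c : Fin S,
        s.noncommProd (fun i => exp (τ • (Pmat S d i - 1)))
          (hc.mono fun _ => Finset.mem_insert_of_mem) (Function.update x a c) y
        = if c = y a ∧ ∀ j, j ∉ s → j ≠ a → x j = y j then
            ∏ i ∈ s, ((1 / (S : ℝ)) * (1 - Real.exp (-τ)) +
              Real.exp (-τ) * (if x i = y i then 1 else 0))
          else 0 := by
      intro c
      rw [ih _ _ _]
      have hiff : (∀ j, j ∉ s → Function.update x a c j = y j) ↔
          (c = y a ∧ ∀ j, j ∉ s → j ≠ a → x j = y j) := by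
        constructor
        · intro h
          refine ⟨?_, fun j hjs hja => ?_⟩
          · have := h a ha
            rwa [Function.update_self] at this
          · have := h j hjs
            rwa [Function.update_of_ne hja] at this
        · rintro ⟨hcc, h⟩ j hjs
          by_cases hja : j = a
          · subst hja; rw [Function.update_self]; exact hcc
          · rw [Function.update_of_ne hja]; exact h j hjs hja
      have hprod : (∏ i ∈ s, ((1 / (S : ℝ)) * (1 - Real.exp (-τ)) +
            Real.exp (-τ) * (if Function.update x a c i = y i then 1 else 0)))
          = ∏ i ∈ s, ((1 / (S : ℝ)) * (1 - Real.exp (-τ)) +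
            Real.exp (-τ) * (if x i = y i then 1 else 0)) := by
        refine Finset.prod_congr rfl fun i hi => ?_
        have hia : i ≠ a := fun h => ha (h ▸ hi)
        rw [Function.update_of_ne hia]
      rw [hprod]
      exact if_congr hiff rfl rfl
    simp only [h1, h2]
    by_cases hC : ∀ j, j ∉ s → j ≠ a → x j = y j
    · have hC' : ∀ j, j ∉ insert a s → x j = y j := by
        intro j hj
        exact hC j (fun h => hj (Finset.mem_insert_of_mem h))
          (fun h => hj (h ▸ Finset.mem_insert_self a s))
      rw [if_pos hC', Finset.prod_insert ha]
      have hterm : ∀ c : Fin S,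
          ((1 / (S : ℝ)) * (1 - Real.exp (-τ)) + Real.exp (-τ) * (if x a = c then 1 else 0)) *
            (if c = y a ∧ ∀ j, j ∉ s → j ≠ a → x j = y j then
              ∏ i ∈ s, ((1 / (S : ℝ)) * (1 - Real.exp (-τ)) +
                Real.exp (-τ) * (if x i = y i then 1 else 0))
            else 0)
          = if c = y a then
              ((1 / (S : ℝ)) * (1 - Real.exp (-τ)) + Real.exp (-τ) * (if x a = c then 1 else 0)) *
              ∏ i ∈ s, ((1 / (S : ℝ)) * (1 - Real.exp (-τ)) +
                Real.exp (-τ) * (if x i = y i then 1 else 0))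
            else 0 := by
        intro c
        rw [if_congr (and_iff_left hC) rfl rfl, mul_ite, mul_zero]
      rw [Finset.sum_congr rfl fun c _ => hterm c]
      rw [Finset.sum_ite_eq' Finset.univ (y a)]
      simp only [Finset.mem_univ, if_true]
    · have hC' : ¬ ∀ j, j ∉ insert a s → x j = y j := by
        intro h
        exact hC fun j hjs hja => h j (by simp [hja, hjs])
      rw [if_neg hC']
      rw [Finset.sum_congr rfl fun c _ => ?_, Finset.sum_const, smul_zero]
      have hand : ¬ (c = y a ∧ ∀ j, j ∉ s → j ≠ a → x j = y j) := fun h => hC h.2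
      rw [if_neg hand, mul_zero]


/-- Entrywise formula for `exp(τQ)` and the resulting formula for the forward marginal. -/
theorem exp_tau_Q_entry_and_marginal (S d : ℕ) (hS : 2 ≤ S) (hd : 1 ≤ d)
    (p : (Fin d → Fin S) → ℝ) (hp : ∀ x, 0 ≤ p x) (hp1 : ∑ x, p x = 1) :
    (∀ τ : ℝ, 0 ≤ τ → ∀ x y : Fin d → Fin S,
      NormedSpace.exp (τ • Qmat S d) x y =
        ∏ i : Fin d,
          ((1 / (S : ℝ)) * (1 - Real.exp (-τ)) +
            Real.exp (-τ) * (if x i = y i then 1 else 0))) ∧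
    (∀ t : ℝ, 0 ≤ t → ∀ y : Fin d → Fin S,
      qmarg S d p t y =
        ∑ x : Fin d → Fin S, p x *
          ∏ i : Fin d,
            ((1 / (S : ℝ)) * (1 - Real.exp (-t)) +
              Real.exp (-t) * (if x i = y i then 1 else 0))) := by
  have part1 : ∀ τ : ℝ, ∀ x y : Fin d → Fin S,
      NormedSpace.exp (τ • Qmat S d) x y =
        ∏ i : Fin d,
          ((1 / (S : ℝ)) * (1 - Real.exp (-τ)) +
            Real.exp (-τ) * (if x i = y i then 1 else 0)) := by
    intro τ x y
    have hsum : τ • Qmat S d = ∑ i : Fin d, τ • (Pmat S d i - 1) := by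
      rw [Qmat_eq_sum, Finset.smul_sum]
    have hcomm : ((Finset.univ : Finset (Fin d)) : Set (Fin d)).Pairwise
        (Function.onFun Commute fun i => τ • (Pmat S d i - 1)) := by
      intro i _ j _ _
      have h1 : Commute (Pmat S d i) (Pmat S d j - 1) :=
        (Pmat_comm i j).sub_right (Commute.one_right _)
      have h2 : Commute (1 : Matrix (Fin d → Fin S) (Fin d → Fin S) ℝ) (Pmat S d j - 1) :=
        Commute.one_left _
      exact ((h1.sub_left h2).smul_left τ).smul_right τ
    rw [hsum, Matrix.exp_sum_of_commute Finset.univ (fun i => τ • (Pmat S d i - 1)) hcomm]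
    have hexp : ∀ i : Fin d, exp (τ • (Pmat S d i - 1)) = exp (τ • (Pmat S d i - 1)) :=
      fun _ => rfl
    exact (noncommProd_exp_apply τ Finset.univ _ x y).trans
      (if_pos (fun j hj => absurd (Finset.mem_univ j) hj))
  refine ⟨fun τ _ x y => part1 τ x y, fun t _ y => ?_⟩
  show (NormedSpace.exp (t • Qmat S d)).mulVec p y = _
  rw [Matrix.mulVec, dotProduct]
  refine Finset.sum_congr rfl fun x _ => ?_
  rw [part1 t y x, mul_comm]
  congr 1
  exact Finset.prod_congr rfl fun i _ => congrArg₂ _ rfl (congrArg _ (if_congr eq_comm rfl rfl))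
end

section
/- For every integer S ≥ 2 and all positive reals a_1,…,a_S: (1/S)·∑_{i=1}^{S} a_i·log a_i − ((1/S)·∑_{i=1}^{S} a_i)·log((1/S)·∑_{i=1}^{S} a_i) ≤ (1/(2S²))·∑_{i=1}^{S} ∑_{j=1}^{S} (a_i − a_j)·(log a_i − log a_j). -/
open scoped BigOperators

/-- The elementary inequality giving the modified log-Sobolev inequality with
constant `C_LSI = 2` for the uniform-rate chain on `[S]`. -/
theorem mlsi_elementary (S : ℕ) (hS : 2 ≤ S) (a : Fin S → ℝ) (ha : ∀ i, 0 < a i) :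
    (1 / (S : ℝ)) * ∑ i, a i * Real.log (a i) -
      ((1 / (S : ℝ)) * ∑ i, a i) * Real.log ((1 / (S : ℝ)) * ∑ i, a i) ≤
    (1 / (2 * (S : ℝ) ^ 2)) *
      ∑ i, ∑ j, (a i - a j) * (Real.log (a i) - Real.log (a j)) := by
  haveI : Nonempty (Fin S) := ⟨⟨0, by omega⟩⟩
  have hS0 : (0:ℝ) < S := by
    have : (2:ℝ) ≤ S := by exact_mod_cast hS
    linarith
  set T : ℝ := ∑ i, a i with hTdef
  set L : ℝ := ∑ i, Real.log (a i) with hLdef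
  set M : ℝ := ∑ i, a i * Real.log (a i) with hMdef
  have hT : 0 < T := Finset.sum_pos (fun i _ => ha i) Finset.univ_nonempty
  have habar : 0 < (1 / (S:ℝ)) * T := by positivity
  -- double sum identity
  have hdouble : (∑ i, ∑ j, (a i - a j) * (Real.log (a i) - Real.log (a j)))
      = 2 * (S * M - T * L) := by
    have hinner : ∀ i : Fin S, (∑ j, (a i - a j) * (Real.log (a i) - Real.log (a j)))
        = S * (a i * Real.log (a i)) - a i * L - T * Real.log (a i) + M := by
      intro i
      have hpt : ∀ j : Fin S, (a i - a j) * (Real.log (a i) - Real.log (a j))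
          = a i * Real.log (a i) - a i * Real.log (a j) - a j * Real.log (a i)
            + a j * Real.log (a j) := fun j => by ring
      rw [Finset.sum_congr rfl (fun j _ => hpt j), Finset.sum_add_distrib,
        Finset.sum_sub_distrib, Finset.sum_sub_distrib, Finset.sum_const,
        Finset.card_univ, Fintype.card_fin, nsmul_eq_mul, ← Finset.mul_sum,
        ← Finset.sum_mul, ← hLdef, ← hTdef, ← hMdef]
    rw [Finset.sum_congr rfl (fun i _ => hinner i), Finset.sum_add_distrib,
      Finset.sum_sub_distrib, Finset.sum_sub_distrib, Finset.sum_const,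
      Finset.card_univ, Fintype.card_fin, nsmul_eq_mul, ← Finset.mul_sum,
      ← Finset.mul_sum, ← Finset.sum_mul, ← hMdef, ← hLdef, ← hTdef]
    ring
  -- Jensen: L ≤ S * log abar
  have hJ : L ≤ S * Real.log ((1 / (S:ℝ)) * T) := by
    have hlog : ∀ i : Fin S, Real.log (a i)
        ≤ Real.log ((1 / (S:ℝ)) * T) + a i / ((1 / (S:ℝ)) * T) - 1 := by
      intro i
      have h1 := Real.log_le_sub_one_of_pos
        (show 0 < a i / ((1 / (S:ℝ)) * T) from div_pos (ha i) habar)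
      rw [Real.log_div (ne_of_gt (ha i)) (ne_of_gt habar)] at h1
      linarith
    have hsum := Finset.sum_le_sum (fun i (_ : i ∈ Finset.univ) => hlog i)
    rw [Finset.sum_sub_distrib, Finset.sum_add_distrib] at hsum
    have hsumdiv : (∑ i, a i / ((1 / (S:ℝ)) * T)) = S := by
      rw [← Finset.sum_div, ← hTdef]
      field_simp
    rw [hsumdiv] at hsum
    simp only [Finset.sum_const, Finset.card_univ, Fintype.card_fin, nsmul_eq_mul,
      mul_one, ← hLdef] at hsum
    linarith
  rw [hdouble]
  have key : T * L ≤ T * ((S:ℝ) * Real.log ((1 / (S:ℝ)) * T)) :=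
    mul_le_mul_of_nonneg_left hJ (le_of_lt hT)
  have hS2 : (0:ℝ) < (S:ℝ)^2 := by positivity
  have h2 : (1/(2*(S:ℝ)^2)) * (2*((S:ℝ)*M - T*L)) = M/(S:ℝ) - T*L/(S:ℝ)^2 := by
    field_simp
  have h3 : ((1/(S:ℝ))*T) * Real.log ((1/(S:ℝ))*T)
      = T * ((S:ℝ) * Real.log ((1/(S:ℝ))*T)) / (S:ℝ)^2 := by
    field_simp
  rw [h2, h3]
  have h4 : T*L/(S:ℝ)^2 ≤ T * ((S:ℝ) * Real.log ((1/(S:ℝ))*T)) / (S:ℝ)^2 :=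
    (div_le_div_iff_of_pos_right hS2).mpr key
  have h5 : (1/(S:ℝ))*M = M/(S:ℝ) := by ring
  rw [h5]
  linarith
end

section
/- For every function f : X → (0, ∞): S^{−d}·∑_{x∈X} f(x)·log f(x) − (S^{−d}·∑_{x∈X} f(x))·log(S^{−d}·∑_{x∈X} f(x)) ≤ (1/(2S))·S^{−d}·∑_{x∈X} ∑_{i=1}^{d} ∑_{x̂=1}^{S} (f(x) − f(x^{\i}⊙x̂))·(log f(x) − log f(x^{\i}⊙x̂)). (This is the modified log-Sobolev inequality Ent_{π^d}[f] ≤ (C_LSI/2)·𝓔(f, log f) with constant C_LSI = 2 for the forward chain with rate matrix Q and stationary distribution π^d.) -/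
open scoped BigOperators

open Finset Real

/-- Unnormalized entropy functional: `card α` times the entropy w.r.t. uniform measure. -/
noncomputable def Hent {α : Type*} [Fintype α] (g : α → ℝ) : ℝ :=
  ∑ a, g a * Real.log (g a) -
    (∑ a, g a) * Real.log ((∑ a, g a) / (Fintype.card α : ℝ))

lemma log_ge_one_sub_inv {x : ℝ} (hx : 0 < x) : 1 - x⁻¹ ≤ Real.log x := by
  have h := Real.log_le_sub_one_of_pos (inv_pos.mpr hx)
  rw [Real.log_inv] at h; linarith

lemma logsum2 {a1 a2 b1 b2 : ℝ} (ha1 : 0 < a1) (ha2 : 0 < a2) (hb1 : 0 < b1) (hb2 : 0 < b2) :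
    (a1 + a2) * Real.log ((a1 + a2) / (b1 + b2)) ≤
      a1 * Real.log (a1 / b1) + a2 * Real.log (a2 / b2) := by
  set s := (a1 + a2) / (b1 + b2) with hs
  have hspos : 0 < s := div_pos (by linarith) (by linarith)
  have key : ∀ a b : ℝ, 0 < a → 0 < b →
      a - s * b ≤ a * (Real.log (a / b) - Real.log s) := by
    intro a b ha hb
    have h1 : 0 < a / b := div_pos ha hb
    have h2 : 1 - (a / b / s)⁻¹ ≤ Real.log (a / b / s) := log_ge_one_sub_inv (div_pos h1 hspos)
    rw [Real.log_div (ne_of_gt h1) (ne_of_gt hspos)] at h2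
    have h3 : (a / b / s)⁻¹ = s * b / a := by field_simp
    rw [h3] at h2
    have h4 := mul_le_mul_of_nonneg_left h2 ha.le
    have h5 : a * (1 - s * b / a) = a - s * b := by field_simp
    linarith
  have k1 := key a1 b1 ha1 hb1
  have k2 := key a2 b2 ha2 hb2
  have hsum : s * (b1 + b2) = a1 + a2 := by
    rw [hs]; field_simp
  have e1 : a1 * (Real.log (a1 / b1) - Real.log s) =
      a1 * Real.log (a1 / b1) - a1 * Real.log s := by ring
  have e2 : a2 * (Real.log (a2 / b2) - Real.log s) =
      a2 * Real.log (a2 / b2) - a2 * Real.log s := by ring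
  have e3 : (a1 + a2) * Real.log s = a1 * Real.log s + a2 * Real.log s := by ring
  have e4 : s * (b1 + b2) = s * b1 + s * b2 := by ring
  linarith

lemma Hent_eq {α : Type*} [Fintype α] [Nonempty α] (g : α → ℝ) (hg : ∀ a, 0 < g a) :
    Hent g = ∑ a, g a * Real.log (g a / ∑ b, g b) +
      (∑ a, g a) * Real.log (Fintype.card α : ℝ) := by
  have hT : 0 < ∑ a, g a := Finset.sum_pos (fun a _ => hg a) univ_nonempty
  have hn : (0:ℝ) < (Fintype.card α : ℝ) := by
    exact_mod_cast Fintype.card_pos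
  have h1 : ∀ a : α, g a * Real.log (g a / ∑ b, g b) =
      g a * Real.log (g a) - g a * Real.log (∑ b, g b) := by
    intro a
    rw [Real.log_div (ne_of_gt (hg a)) (ne_of_gt hT)]; ring
  rw [Hent, Real.log_div (ne_of_gt hT) (ne_of_gt hn)]
  simp only [h1]
  rw [Finset.sum_sub_distrib, ← Finset.sum_mul]
  ring

lemma Hent_add_le {α : Type*} [Fintype α] [Nonempty α] (g h : α → ℝ)
    (hg : ∀ a, 0 < g a) (hh : ∀ a, 0 < h a) :
    Hent (fun a => g a + h a) ≤ Hent g + Hent h := by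
  have hT : 0 < ∑ a, g a := Finset.sum_pos (fun a _ => hg a) univ_nonempty
  have hU : 0 < ∑ a, h a := Finset.sum_pos (fun a _ => hh a) univ_nonempty
  rw [Hent_eq g hg, Hent_eq h hh, Hent_eq _ (fun a => add_pos (hg a) (hh a))]
  have key : ∑ a, (g a + h a) * Real.log ((g a + h a) / ∑ b, (g b + h b)) ≤
      (∑ a, g a * Real.log (g a / ∑ b, g b)) + ∑ a, h a * Real.log (h a / ∑ b, h b) := by
    rw [← Finset.sum_add_distrib]
    apply Finset.sum_le_sum
    intro a _
    have := logsum2 (hg a) (hh a) hT hU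
    rwa [Finset.sum_add_distrib] at *
  have hc : (∑ a, (g a + h a)) * Real.log (Fintype.card α : ℝ) =
      (∑ a, g a) * Real.log (Fintype.card α : ℝ) +
      (∑ a, h a) * Real.log (Fintype.card α : ℝ) := by
    rw [Finset.sum_add_distrib]; ring
  linarith

lemma Hent_smul {α : Type*} [Fintype α] [Nonempty α] (c : ℝ) (hc : 0 < c)
    (g : α → ℝ) (hg : ∀ a, 0 < g a) :
    Hent (fun a => c * g a) = c * Hent g := by
  have hT : 0 < ∑ a, g a := Finset.sum_pos (fun a _ => hg a) univ_nonempty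
  have hn : (0:ℝ) < (Fintype.card α : ℝ) := by exact_mod_cast Fintype.card_pos
  have h1 : ∀ a : α, c * g a * Real.log (c * g a) =
      c * (g a * Real.log (g a)) + c * (g a * Real.log c) := by
    intro a
    rw [Real.log_mul (ne_of_gt hc) (ne_of_gt (hg a))]; ring
  have h2 : (∑ a, c * g a) = c * ∑ a, g a := by rw [Finset.mul_sum]
  have h3 : Real.log (c * (∑ a, g a) / (Fintype.card α : ℝ)) =
      Real.log c + Real.log ((∑ a, g a) / (Fintype.card α : ℝ)) := by
    rw [mul_div_assoc, Real.log_mul (ne_of_gt hc) (ne_of_gt (div_pos hT hn))]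
  rw [Hent, Hent]
  simp only [h1]
  rw [Finset.sum_add_distrib, ← Finset.mul_sum, ← Finset.mul_sum, h2, h3]
  have h4 : ∑ i : α, g i * Real.log c = (∑ i : α, g i) * Real.log c :=
    (Finset.sum_mul ..).symm
  rw [h4]
  ring

lemma Hent_sum_le {α : Type*} [Fintype α] [Nonempty α] {ι : Type*} (s : Finset ι)
    (F : ι → α → ℝ) (hF : ∀ j ∈ s, ∀ a, 0 < F j a) :
    Hent (fun a => ∑ j ∈ s, F j a) ≤ ∑ j ∈ s, Hent (F j) := by
  induction s using Finset.cons_induction with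
  | empty => simp [Hent]
  | cons j s hj ih =>
    rcases s.eq_empty_or_nonempty with rfl | hne
    · simp
    · have hFs : ∀ k ∈ s, ∀ a, 0 < F k a := fun k hk => hF k (Finset.mem_cons_of_mem hk)
      have hpos : ∀ a, 0 < ∑ k ∈ s, F k a := fun a =>
        Finset.sum_pos (fun k hk => hFs k hk a) hne
      simp only [Finset.sum_cons]
      calc Hent (fun a => F j a + ∑ k ∈ s, F k a)
          ≤ Hent (F j) + Hent (fun a => ∑ k ∈ s, F k a) :=
            Hent_add_le _ _ (hF j (Finset.mem_cons_self j s)) hpos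
        _ ≤ Hent (F j) + ∑ k ∈ s, Hent (F k) := by linarith [ih hFs]

lemma Hent_le_dirichlet {α : Type*} [Fintype α] [Nonempty α] (g : α → ℝ)
    (hg : ∀ a, 0 < g a) :
    Hent g ≤ (2 * (Fintype.card α : ℝ))⁻¹ *
      ∑ a, ∑ b, (g a - g b) * (Real.log (g a) - Real.log (g b)) := by
  set n : ℝ := (Fintype.card α : ℝ) with hn'
  have hn : (0:ℝ) < n := by rw [hn']; exact_mod_cast Fintype.card_pos
  set E : ℝ := ∑ a, g a * Real.log (g a) with hE
  set T : ℝ := ∑ a, g a with hT'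
  set L : ℝ := ∑ a, Real.log (g a) with hL'
  have hT : 0 < T := Finset.sum_pos (fun a _ => hg a) univ_nonempty
  have hexp : ∑ a, ∑ b, (g a - g b) * (Real.log (g a) - Real.log (g b)) =
      2 * (n * E - T * L) := by
    have h1 : ∀ a : α, ∑ b, (g a - g b) * (Real.log (g a) - Real.log (g b)) =
        n * (g a * Real.log (g a)) - g a * L - T * Real.log (g a) + E := by
      intro a
      have : ∀ b : α, (g a - g b) * (Real.log (g a) - Real.log (g b)) =
          (g a * Real.log (g a) - g a * Real.log (g b)) -
          (g b * Real.log (g a) - g b * Real.log (g b)) := by intro b; ring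
      simp only [this]
      rw [Finset.sum_sub_distrib, Finset.sum_sub_distrib, Finset.sum_sub_distrib,
        Finset.sum_const, ← Finset.mul_sum, ← Finset.sum_mul, Finset.card_univ,
        nsmul_eq_mul]
      rw [← hL', ← hT', ← hE, ← hn']
      ring
    simp only [h1]
    rw [Finset.sum_add_distrib, Finset.sum_sub_distrib, Finset.sum_sub_distrib,
      Finset.sum_const, ← Finset.mul_sum, ← Finset.sum_mul, ← Finset.mul_sum,
      Finset.card_univ, nsmul_eq_mul]
    rw [← hL', ← hT', ← hE, ← hn']
    ring
  have hL : L ≤ n * Real.log (T / n) := by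
    have h1 : ∀ a : α, Real.log (g a) - Real.log (T / n) ≤ g a * (n / T) - 1 := by
      intro a
      have hq : 0 < g a / (T / n) := div_pos (hg a) (div_pos hT hn)
      have := Real.log_le_sub_one_of_pos hq
      rw [Real.log_div (ne_of_gt (hg a)) (ne_of_gt (div_pos hT hn))] at this
      have he : g a / (T / n) = g a * (n / T) := by field_simp
      linarith [he ▸ this]
    have h2 := Finset.sum_le_sum (fun a (_ : a ∈ univ) => h1 a)
    rw [Finset.sum_sub_distrib, Finset.sum_const, Finset.card_univ, nsmul_eq_mul,
      Finset.sum_sub_distrib, ← Finset.sum_mul, Finset.sum_const, Finset.card_univ,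
      nsmul_eq_mul, mul_one, ← hL', ← hT'] at h2
    have h3 : T * (n / T) = n := by field_simp
    rw [← hn'] at h2
    nlinarith [h2]
  rw [hexp]
  have e1 : (2 * n)⁻¹ * (2 * (n * E - T * L)) = E - T * L / n := by field_simp
  rw [e1]
  have h4 : Hent g = E - T * Real.log (T / n) := rfl
  rw [h4]
  have h5 : T / n * L ≤ T / n * (n * Real.log (T / n)) :=
    mul_le_mul_of_nonneg_left hL (le_of_lt (div_pos hT hn))
  have h6 : T / n * (n * Real.log (T / n)) = T * Real.log (T / n) := by field_simp
  have h7 : T * L / n = T / n * L := by ring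
  linarith

/-- Reindexing sums over `Fin (d+1) → Fin S` via `Fin.cons`. -/
lemma sum_cons_reindex (S d : ℕ) (G : (Fin (d+1) → Fin S) → ℝ) :
    ∑ x : Fin (d+1) → Fin S, G x =
      ∑ c : Fin S, ∑ y : Fin d → Fin S, G (Fin.cons c y) := by
  rw [← Equiv.sum_comp (Fin.consEquiv (fun _ => Fin S)) G, Fintype.sum_prod_type]
  rfl

lemma card_pi_fin (S d : ℕ) : (Fintype.card (Fin d → Fin S) : ℝ) = (S : ℝ) ^ d := by
  rw [Fintype.card_fun, Fintype.card_fin, Fintype.card_fin]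
  push_cast
  ring

/-- Chain rule for the entropy functional. -/
lemma Hent_chain (S d : ℕ) (hS : 0 < S) (f : (Fin (d+1) → Fin S) → ℝ) :
    Hent f = (∑ y : Fin d → Fin S, Hent (fun c => f (Fin.cons c y))) +
      (S : ℝ) * Hent (fun y : Fin d → Fin S => (S : ℝ)⁻¹ * ∑ c : Fin S, f (Fin.cons c y)) := by
  have hSpos : (0:ℝ) < (S:ℝ) := by exact_mod_cast hS
  have h1 : ∑ x : Fin (d+1) → Fin S, f x * Real.log (f x) =
      ∑ y : Fin d → Fin S, ∑ c : Fin S, f (Fin.cons c y) * Real.log (f (Fin.cons c y)) := by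
    rw [sum_cons_reindex, Finset.sum_comm]
  have h2 : ∑ x : Fin (d+1) → Fin S, f x =
      ∑ y : Fin d → Fin S, ∑ c : Fin S, f (Fin.cons c y) := by
    rw [sum_cons_reindex, Finset.sum_comm]
  set t : (Fin d → Fin S) → ℝ := fun y => ∑ c : Fin S, f (Fin.cons c y) with ht
  set T : ℝ := ∑ y : Fin d → Fin S, t y with hT
  -- pieces
  have hc1 : (Fintype.card (Fin (d+1) → Fin S) : ℝ) = (S:ℝ)^(d+1) := card_pi_fin S (d+1)
  have hc2 : (Fintype.card (Fin d → Fin S) : ℝ) = (S:ℝ)^d := card_pi_fin S d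
  have hHf : Hent f = (∑ y : Fin d → Fin S, ∑ c : Fin S,
      f (Fin.cons c y) * Real.log (f (Fin.cons c y))) - T * Real.log (T / (S:ℝ)^(d+1)) := by
    rw [Hent, h1, h2, hc1]
  have hslice : ∀ y : Fin d → Fin S, Hent (fun c => f (Fin.cons c y)) =
      (∑ c : Fin S, f (Fin.cons c y) * Real.log (f (Fin.cons c y))) -
        t y * Real.log (t y / (S:ℝ)) := by
    intro y
    rw [Hent, Fintype.card_fin]
  have hmean : Hent (fun y : Fin d → Fin S => (S:ℝ)⁻¹ * t y) =
      (∑ y : Fin d → Fin S, (S:ℝ)⁻¹ * t y * Real.log ((S:ℝ)⁻¹ * t y)) -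
        ((S:ℝ)⁻¹ * T) * Real.log ((S:ℝ)⁻¹ * T / (S:ℝ)^d) := by
    rw [Hent, ← Finset.mul_sum, hc2, ← hT]
  rw [hHf, hmean]
  simp only [hslice]
  rw [Finset.sum_sub_distrib]
  have e1 : ∀ y : Fin d → Fin S, (S:ℝ)⁻¹ * t y * Real.log ((S:ℝ)⁻¹ * t y) =
      (S:ℝ)⁻¹ * (t y * Real.log (t y / (S:ℝ))) := by
    intro y
    rw [inv_mul_eq_div]
    ring
  simp only [e1]
  rw [← Finset.mul_sum]
  have e2 : (S:ℝ)⁻¹ * T / (S:ℝ)^d = T / (S:ℝ)^(d+1) := by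
    rw [inv_mul_eq_div, div_div, pow_succ, mul_comm ((S:ℝ)) ((S:ℝ)^d)]
  rw [e2]
  field_simp
  ring

theorem Hent_tensor (S : ℕ) (hS : 0 < S) :
    ∀ (d : ℕ) (f : (Fin d → Fin S) → ℝ), (∀ x, 0 < f x) →
    Hent f ≤ ∑ i : Fin d, (S:ℝ)⁻¹ *
      ∑ x : Fin d → Fin S, Hent (fun a => f (Function.update x i a)) := by
  have hSpos : (0:ℝ) < (S:ℝ) := by exact_mod_cast hS
  have : NeZero S := ⟨by omega⟩
  intro d
  induction d with
  | zero =>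
    intro f hf
    have h0 : Hent f = 0 := by
      rw [Hent]
      have hcard : (Fintype.card (Fin 0 → Fin S) : ℝ) = 1 := by
        simp [Fintype.card_fun]
      rw [hcard]
      simp
    rw [h0]
    simp
  | succ d ih =>
    intro f hf
    rw [Hent_chain S d hS f]
    set g : (Fin d → Fin S) → ℝ := fun y => (S:ℝ)⁻¹ * ∑ c : Fin S, f (Fin.cons c y) with hg
    have hgpos : ∀ y, 0 < g y := by
      intro y
      exact mul_pos (inv_pos.mpr hSpos)
        (Finset.sum_pos (fun c _ => hf _) univ_nonempty)
    have hIH := ih g hgpos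
    -- convexity step: Hent of a slice of g is bounded by average of Hent of slices of f
    have hconv : ∀ (i : Fin d) (y : Fin d → Fin S),
        Hent (fun a => g (Function.update y i a)) ≤
          (S:ℝ)⁻¹ * ∑ c : Fin S, Hent (fun a => f (Fin.cons c (Function.update y i a))) := by
      intro i y
      have h1 : (fun a : Fin S => g (Function.update y i a)) =
          (fun a : Fin S => (S:ℝ)⁻¹ *
            ∑ c : Fin S, f (Fin.cons c (Function.update y i a))) := rfl
      rw [h1, Hent_smul (S:ℝ)⁻¹ (inv_pos.mpr hSpos) _
        (fun a => Finset.sum_pos (fun c _ => hf _) univ_nonempty)]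
      have h2 := Hent_sum_le (univ : Finset (Fin S))
        (fun c => fun a : Fin S => f (Fin.cons c (Function.update y i a)))
        (fun c _ a => hf _)
      have h3 : Hent (fun a : Fin S => ∑ c : Fin S, f (Fin.cons c (Function.update y i a)))
          ≤ ∑ c : Fin S, Hent (fun a : Fin S => f (Fin.cons c (Function.update y i a))) := h2
      exact mul_le_mul_of_nonneg_left h3 (le_of_lt (inv_pos.mpr hSpos))
    -- bound the second term
    have hstep : (S:ℝ) * Hent g ≤ ∑ i : Fin d, (S:ℝ)⁻¹ *
        ∑ x : Fin (d+1) → Fin S, Hent (fun a => f (Function.update x i.succ a)) := by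
      have hB : Hent g ≤ ∑ i : Fin d, (S:ℝ)⁻¹ * ∑ y : Fin d → Fin S,
          ((S:ℝ)⁻¹ * ∑ c : Fin S, Hent (fun a => f (Fin.cons c (Function.update y i a)))) := by
        refine le_trans hIH (Finset.sum_le_sum fun i _ => ?_)
        exact mul_le_mul_of_nonneg_left
          (Finset.sum_le_sum fun y _ => hconv i y) (le_of_lt (inv_pos.mpr hSpos))
      have hmul := mul_le_mul_of_nonneg_left hB (le_of_lt hSpos)
      refine le_trans hmul (le_of_eq ?_)
      rw [Finset.mul_sum]
      refine Finset.sum_congr rfl fun i _ => ?_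
      rw [sum_cons_reindex S d (fun x => Hent (fun a => f (Function.update x i.succ a)))]
      have hcu : ∀ (c : Fin S) (y : Fin d → Fin S),
          Hent (fun a => f (Function.update (Fin.cons c y) i.succ a)) =
          Hent (fun a => f (Fin.cons c (Function.update y i a))) := by
        intro c y
        congr 1
        funext a
        rw [Fin.cons_update]
      simp only [hcu]
      rw [Finset.sum_comm, ← Finset.mul_sum, ← mul_assoc,
        mul_inv_cancel₀ (ne_of_gt hSpos), one_mul]
    -- the zeroth term
    have hzero : ∑ y : Fin d → Fin S, Hent (fun c => f (Fin.cons c y)) =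
        (S:ℝ)⁻¹ * ∑ x : Fin (d+1) → Fin S, Hent (fun a => f (Function.update x 0 a)) := by
      rw [sum_cons_reindex S d (fun x => Hent (fun a => f (Function.update x 0 a)))]
      have hcu : ∀ (c : Fin S) (y : Fin d → Fin S),
          Hent (fun a => f (Function.update (Fin.cons c y) 0 a)) =
          Hent (fun a => f (Fin.cons a y)) := by
        intro c y
        congr 1
        funext a
        rw [Fin.update_cons_zero]
      simp only [hcu]
      rw [Finset.sum_const, Finset.card_univ, Fintype.card_fin, nsmul_eq_mul,
        ← mul_assoc, inv_mul_cancel₀ (ne_of_gt hSpos), one_mul]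
    rw [Fin.sum_univ_succ]
    rw [← hzero]
    linarith [hstep]

/-- Reindexing: summing a function of `update x i a` over `(x, a)` equals `S` times its sum. -/
lemma sum_update_reindex (S d : ℕ) (i : Fin d) (G : (Fin d → Fin S) → ℝ) :
    ∑ x : Fin d → Fin S, ∑ a : Fin S, G (Function.update x i a) =
      (S : ℝ) * ∑ x : Fin d → Fin S, G x := by
  have key : ∑ p : (Fin d → Fin S) × Fin S, G (Function.update p.1 i p.2) =
      ∑ p : (Fin d → Fin S) × Fin S, G p.1 := by
    apply Fintype.sum_bijective
      (fun p : (Fin d → Fin S) × Fin S => (Function.update p.1 i p.2, p.1 i))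
    · apply Function.Involutive.bijective
      intro p
      simp [Function.update_idem, Function.update_self, Function.update_eq_self]
    · intro p
      rfl
  rw [Fintype.sum_prod_type] at key
  rw [key, Fintype.sum_prod_type]
  have : ∀ x : Fin d → Fin S, ∑ _a : Fin S, G x = (S : ℝ) * G x := by
    intro x
    rw [Finset.sum_const, Finset.card_univ, Fintype.card_fin, nsmul_eq_mul]
  simp only [this]
  rw [← Finset.mul_sum]

/-- The modified log-Sobolev inequality `Ent_{π^d}[f] ≤ 𝓔(f, log f)` with constant
`C_LSI = 2` for the forward chain on `X = [S]^d` with stationary distribution `π^d`. -/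
theorem mlsi_product (S d : ℕ) (hS : 2 ≤ S) (hd : 1 ≤ d)
    (f : (Fin d → Fin S) → ℝ) (hf : ∀ x, 0 < f x) :
    ((S : ℝ) ^ d)⁻¹ * ∑ x : Fin d → Fin S, f x * Real.log (f x) -
      (((S : ℝ) ^ d)⁻¹ * ∑ x : Fin d → Fin S, f x) *
        Real.log (((S : ℝ) ^ d)⁻¹ * ∑ x : Fin d → Fin S, f x) ≤
    (1 / (2 * (S : ℝ))) * (((S : ℝ) ^ d)⁻¹ *
      ∑ x : Fin d → Fin S, ∑ i : Fin d, ∑ xh : Fin S,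
        (f x - f (Function.update x i xh)) *
          (Real.log (f x) - Real.log (f (Function.update x i xh)))) := by
  have hS0 : 0 < S := by omega
  have : NeZero S := ⟨by omega⟩
  have hSpos : (0:ℝ) < (S:ℝ) := by exact_mod_cast hS0
  have hSd : (0:ℝ) < (S:ℝ)^d := by positivity
  -- LHS equals (S^d)⁻¹ * Hent f
  have hLHS : ((S : ℝ) ^ d)⁻¹ * (∑ x : Fin d → Fin S, f x * Real.log (f x)) -
      (((S : ℝ) ^ d)⁻¹ * ∑ x : Fin d → Fin S, f x) *
        Real.log (((S : ℝ) ^ d)⁻¹ * ∑ x : Fin d → Fin S, f x) =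
      ((S : ℝ) ^ d)⁻¹ * Hent f := by
    rw [Hent, card_pi_fin, mul_sub]
    rw [inv_mul_eq_div ((S:ℝ)^d) (∑ x : Fin d → Fin S, f x)]
    ring
  rw [hLHS]
  -- bound Hent f
  have h1 := Hent_tensor S hS0 d f hf
  -- bound each slice entropy by Dirichlet form
  have h2 : ∀ (i : Fin d) (x : Fin d → Fin S),
      Hent (fun a => f (Function.update x i a)) ≤
        (2 * (S:ℝ))⁻¹ * ∑ a : Fin S, ∑ b : Fin S,
          (f (Function.update x i a) - f (Function.update x i b)) *
            (Real.log (f (Function.update x i a)) - Real.log (f (Function.update x i b))) := by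
    intro i x
    have := Hent_le_dirichlet (fun a : Fin S => f (Function.update x i a)) (fun a => hf _)
    rwa [Fintype.card_fin] at this
  -- combine
  have h3 : Hent f ≤ ∑ i : Fin d, (S:ℝ)⁻¹ * ((2 * (S:ℝ))⁻¹ *
      ∑ x : Fin d → Fin S, ∑ a : Fin S, ∑ b : Fin S,
        (f (Function.update x i a) - f (Function.update x i b)) *
          (Real.log (f (Function.update x i a)) - Real.log (f (Function.update x i b)))) := by
    refine le_trans h1 (Finset.sum_le_sum fun i _ => ?_)
    exact mul_le_mul_of_nonneg_left
      (le_trans (Finset.sum_le_sum fun x _ => h2 i x) (le_of_eq (Finset.mul_sum ..).symm))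
      (le_of_lt (inv_pos.mpr hSpos))
  -- simplify the double-update sum using sum_update_reindex
  have h4 : ∀ i : Fin d,
      ∑ x : Fin d → Fin S, ∑ a : Fin S, ∑ b : Fin S,
        (f (Function.update x i a) - f (Function.update x i b)) *
          (Real.log (f (Function.update x i a)) - Real.log (f (Function.update x i b))) =
      (S:ℝ) * ∑ x : Fin d → Fin S, ∑ b : Fin S,
        (f x - f (Function.update x i b)) *
          (Real.log (f x) - Real.log (f (Function.update x i b))) := by
    intro i
    have := sum_update_reindex S d i (fun x => ∑ b : Fin S,
        (f x - f (Function.update x i b)) *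
          (Real.log (f x) - Real.log (f (Function.update x i b))))
    rw [← this]
    refine Finset.sum_congr rfl fun x _ => Finset.sum_congr rfl fun a _ => ?_
    refine Finset.sum_congr rfl fun b _ => ?_
    rw [Function.update_idem]
  have h5 : Hent f ≤ (2 * (S:ℝ))⁻¹ * ∑ i : Fin d, ∑ x : Fin d → Fin S, ∑ b : Fin S,
      (f x - f (Function.update x i b)) *
        (Real.log (f x) - Real.log (f (Function.update x i b))) := by
    refine le_trans h3 (le_of_eq ?_)
    rw [Finset.mul_sum]
    refine Finset.sum_congr rfl fun i _ => ?_
    rw [h4 i, ← mul_assoc, ← mul_assoc]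
    congr 1
    field_simp
  -- finish
  have h6 : ∑ x : Fin d → Fin S, ∑ i : Fin d, ∑ xh : Fin S,
      (f x - f (Function.update x i xh)) *
        (Real.log (f x) - Real.log (f (Function.update x i xh))) =
      ∑ i : Fin d, ∑ x : Fin d → Fin S, ∑ b : Fin S,
      (f x - f (Function.update x i b)) *
        (Real.log (f x) - Real.log (f (Function.update x i b))) := Finset.sum_comm
  rw [h6]
  calc ((S : ℝ) ^ d)⁻¹ * Hent f
      ≤ ((S : ℝ) ^ d)⁻¹ * ((2 * (S:ℝ))⁻¹ * ∑ i : Fin d, ∑ x : Fin d → Fin S, ∑ b : Fin S,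
        (f x - f (Function.update x i b)) *
          (Real.log (f x) - Real.log (f (Function.update x i b)))) :=
        mul_le_mul_of_nonneg_left h5 (le_of_lt (inv_pos.mpr hSd))
    _ = _ := by rw [one_div]; ring
end

section
/- For every probability vector p_data on X, every t > 0, every x ∈ X, every i ∈ [d] and every x̂ ∈ [S] with x̂ ≠ x^i: s_t(x)_{i,x̂} = q_t(x^{\i}⊙x̂)/q_t(x) ≤ 1 + S/(e^t − 1). Consequently, for every δ > 0 and every t ≥ δ: s_t(x)_{i,x̂} ≤ 1 + S/(e^δ − 1). -/
open scoped BigOperators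

variable {S d : ℕ}

def detM (S d : ℕ) (f : (Fin d → Fin S) → (Fin d → Fin S)) :
    Matrix (Fin d → Fin S) (Fin d → Fin S) ℝ :=
  fun x y => if f x = y then 1 else 0

lemma detM_mul (f g : (Fin d → Fin S) → (Fin d → Fin S)) :
    detM S d f * detM S d g = detM S d (g ∘ f) := by
  funext x z
  simp only [detM, Matrix.mul_apply, ite_mul, one_mul, zero_mul]
  rw [Finset.sum_ite_eq]
  simp [Function.comp]

lemma detM_mulVec (f : (Fin d → Fin S) → (Fin d → Fin S)) (v : (Fin d → Fin S) → ℝ) (x) :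
    (detM S d f).mulVec v x = v (f x) := by
  simp only [detM, Matrix.mulVec, dotProduct, ite_mul, one_mul, zero_mul]
  rw [Finset.sum_ite_eq]
  simp

def Jm (S d : ℕ) (i : Fin d) : Matrix (Fin d → Fin S) (Fin d → Fin S) ℝ :=
  ∑ a : Fin S, detM S d (fun x => Function.update x i a)

lemma Jm_apply (i : Fin d) (x y : Fin d → Fin S) :
    Jm S d i x y = if Function.update x i (y i) = y then 1 else 0 := by
  simp only [Jm, Matrix.sum_apply, detM]
  by_cases h : Function.update x i (y i) = y
  · rw [if_pos h]
    have : ∀ a : Fin S, (Function.update x i a = y) ↔ (a = y i) := by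
      intro a
      constructor
      · intro ha; rw [← ha]; simp
      · intro ha; rw [ha, h]
    simp only [this]
    simp
  · rw [if_neg h]
    apply Finset.sum_eq_zero
    intro a _
    rw [if_neg]
    intro ha
    apply h
    have : a = y i := by rw [← ha]; simp
    rw [← this, ha]

lemma Jm_comm (i j : Fin d) : Jm S d i * Jm S d j = Jm S d j * Jm S d i := by
  by_cases hij : i = j
  · rw [hij]
  · simp only [Jm, Finset.sum_mul, Finset.mul_sum, detM_mul]
    rw [Finset.sum_comm]
    apply Finset.sum_congr rfl; intro a _
    apply Finset.sum_congr rfl; intro b _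
    have key : ((fun x => Function.update x j b) ∘ fun x : Fin d → Fin S => Function.update x i a)
        = ((fun x => Function.update x i a) ∘ fun x : Fin d → Fin S => Function.update x j b) := by
      funext x
      exact Function.update_comm hij a b x
    rw [key]

lemma Jm_sq (i : Fin d) : Jm S d i * Jm S d i = (S : ℝ) • Jm S d i := by
  simp only [Jm, Finset.sum_mul, Finset.mul_sum, detM_mul, Function.comp_def,
    Function.update_idem, Finset.sum_const, Finset.card_univ, Fintype.card_fin]
  rw [Finset.smul_sum]
  apply Finset.sum_congr rfl; intro a _
  rw [Nat.cast_smul_eq_nsmul]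

lemma upd_cond {i : Fin d} {x y : Fin d → Fin S} :
    Function.update x i (y i) = y ↔ ∀ j, j ≠ i → x j = y j := by
  constructor
  · intro h j hj
    rw [← h]
    simp [Function.update_of_ne hj]
  · intro h
    funext j
    by_cases hj : j = i
    · subst hj; simp
    · rw [Function.update_of_ne hj]
      exact h j hj

lemma ham_eq_one {i : Fin d} {x y : Fin d → Fin S} (hxy : x ≠ y)
    (h : ∀ j, j ≠ i → x j = y j) : Ham x y = 1 := by
  have hxi : x i ≠ y i := by
    intro hc
    apply hxy
    funext j
    by_cases hj : j = i
    · subst hj; exact hc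
    · exact h j hj
  have : (Finset.univ.filter fun j => x j ≠ y j) = {i} := by
    ext j
    simp only [Finset.mem_filter, Finset.mem_univ, true_and, Finset.mem_singleton]
    constructor
    · intro hne
      by_contra hj
      exact hne (h j hj)
    · intro hj; subst hj; exact hxi
  rw [Ham, this, Finset.card_singleton]

lemma ham_one_exists {x y : Fin d → Fin S} (h : Ham x y = 1) :
    ∃ i : Fin d, x i ≠ y i ∧ ∀ j, j ≠ i → x j = y j := by
  rw [Ham, Finset.card_eq_one] at h
  obtain ⟨i, hi⟩ := h
  refine ⟨i, ?_, ?_⟩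
  · have : i ∈ Finset.univ.filter fun j => x j ≠ y j := by rw [hi]; simp
    simpa using this
  · intro j hj
    by_contra hne
    have : j ∈ Finset.univ.filter fun k => x k ≠ y k := by simp [hne]
    rw [hi, Finset.mem_singleton] at this
    exact hj this

/-- the single-coordinate generator -/
noncomputable def Am (S d : ℕ) (i : Fin d) : Matrix (Fin d → Fin S) (Fin d → Fin S) ℝ :=
  (S : ℝ)⁻¹ • Jm S d i - 1

lemma Q_eq : Qmat S d = ∑ i : Fin d, Am S d i := by
  funext x y
  rw [Matrix.sum_apply]
  simp only [Am, Matrix.sub_apply, Matrix.smul_apply, Matrix.one_apply, Jm_apply, smul_eq_mul]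
  by_cases hxy : x = y
  · subst hxy
    simp only [Function.update_eq_self, if_true, if_pos rfl, Qmat, Finset.sum_sub_distrib,
      Finset.sum_const, Finset.card_univ, Fintype.card_fin, nsmul_eq_mul, mul_one]
    ring
  · rw [Finset.sum_congr rfl (fun i _ => by
      rw [if_neg hxy, sub_zero])]
    by_cases hham : Ham x y = 1
    · obtain ⟨i0, hi0, hoff⟩ := ham_one_exists hham
      have hcond : ∀ i : Fin d, (Function.update x i (y i) = y) ↔ i = i0 := by
        intro i
        rw [upd_cond]
        constructor
        · intro h
          by_contra hne
          exact hi0 (h i0 (fun hc => hne hc.symm))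
        · intro h; subst h; exact hoff
      rw [Finset.sum_congr rfl (fun i _ => by rw [if_congr (hcond i) rfl rfl])]
      simp [Qmat, hxy, hham]
    · have hcond : ∀ i : Fin d, ¬ (Function.update x i (y i) = y) := by
        intro i hc
        rw [upd_cond] at hc
        exact hham (ham_eq_one hxy hc)
      rw [Finset.sum_congr rfl (fun i _ => by rw [if_neg (hcond i)])]
      simp [Qmat, hxy, hham]

lemma Jm_mulVec (i : Fin d) (v : (Fin d → Fin S) → ℝ) (x : Fin d → Fin S) :
    (Jm S d i).mulVec v x = ∑ b : Fin S, v (Function.update x i b) := by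
  simp only [Jm, Matrix.mulVec, dotProduct, Matrix.sum_apply, Finset.sum_mul]
  rw [Finset.sum_comm]
  refine Finset.sum_congr rfl fun b _ => ?_
  exact detM_mulVec (fun z => Function.update z i b) v x

lemma exp_summable (N : Matrix (Fin d → Fin S) (Fin d → Fin S) ℝ) :
    Summable fun n : ℕ => ((n.factorial : ℝ)⁻¹) • N ^ n := by
  letI : SeminormedRing (Matrix (Fin d → Fin S) (Fin d → Fin S) ℝ) :=
    Matrix.linftyOpSemiNormedRing
  letI : NormedRing (Matrix (Fin d → Fin S) (Fin d → Fin S) ℝ) := Matrix.linftyOpNormedRing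
  letI : NormedAlgebra ℝ (Matrix (Fin d → Fin S) (Fin d → Fin S) ℝ) :=
    Matrix.linftyOpNormedAlgebra
  exact NormedSpace.expSeries_summable' (𝕂 := ℝ) N

lemma exp_smul_idem {P : Matrix (Fin d → Fin S) (Fin d → Fin S) ℝ} (hP : P * P = P) (u : ℝ) :
    NormedSpace.exp (u • P) = 1 + (Real.exp u - 1) • P := by
  have hpow : ∀ n : ℕ, P ^ (n + 1) = P := by
    intro n
    induction n with
    | zero => simpa using pow_one P
    | succ k ih => rw [pow_succ, ih, hP]
  rw [NormedSpace.exp_eq_tsum (𝕂 := ℝ)]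
  beta_reduce
  have hterm : ∀ n : ℕ, ((n.factorial : ℝ)⁻¹ • (u • P) ^ n)
      = (u ^ n / n.factorial) • P
        + (if n = 0 then (1 : Matrix (Fin d → Fin S) (Fin d → Fin S) ℝ) - P else 0) := by
    intro n
    cases n with
    | zero => simp
    | succ k =>
      rw [smul_pow, hpow, smul_smul, if_neg (Nat.succ_ne_zero k), add_zero, div_eq_mul_inv,
        mul_comm]
  rw [tsum_congr hterm]
  have h1 : Summable fun n : ℕ => (u ^ n / n.factorial : ℝ) • P :=
    (Real.summable_pow_div_factorial u).smul_const P
  have h2 : Summable fun n : ℕ =>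
      (if n = 0 then (1 : Matrix (Fin d → Fin S) (Fin d → Fin S) ℝ) - P else 0) := by
    apply summable_of_ne_finset_zero (s := {0})
    intro n hn
    rw [if_neg (by simpa using hn)]
  rw [Summable.tsum_add h1 h2, Summable.tsum_smul_const (Real.summable_pow_div_factorial u), tsum_ite_eq]
  have he : ∑' n : ℕ, (u ^ n / n.factorial : ℝ) = Real.exp u := by
    rw [Real.exp_eq_exp_ℝ, NormedSpace.exp_eq_tsum_div]
  rw [he, sub_smul, one_smul]
  abel

lemma exp_smul_one (r : ℝ) :
    NormedSpace.exp (r • (1 : Matrix (Fin d → Fin S) (Fin d → Fin S) ℝ)) = Real.exp r • 1 := by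
  rw [exp_smul_idem (one_mul 1) r, sub_smul, one_smul]
  abel

lemma exp_Am (hS0 : (S : ℝ) ≠ 0) (i : Fin d) (t : ℝ) :
    NormedSpace.exp (t • Am S d i)
      = Real.exp (-t) • 1 + ((1 - Real.exp (-t)) / S) • Jm S d i := by
  have hP : ((S : ℝ)⁻¹ • Jm S d i) * ((S : ℝ)⁻¹ • Jm S d i) = (S : ℝ)⁻¹ • Jm S d i := by
    rw [Matrix.smul_mul, Matrix.mul_smul, Jm_sq, smul_smul, smul_smul]
    congr 1
    field_simp
  have hsplit : t • Am S d i
      = t • ((S : ℝ)⁻¹ • Jm S d i) + (-t) • (1 : Matrix (Fin d → Fin S) (Fin d → Fin S) ℝ) := by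
    rw [Am, smul_sub, neg_smul, sub_eq_add_neg]
  have hcomm : Commute (t • ((S : ℝ)⁻¹ • Jm S d i))
      ((-t) • (1 : Matrix (Fin d → Fin S) (Fin d → Fin S) ℝ)) :=
    (Commute.one_right _).smul_right _
  rw [hsplit, Matrix.exp_add_of_commute _ _ hcomm, exp_smul_idem hP, exp_smul_one, add_mul,
    one_mul, mul_smul_comm, mul_one, smul_smul, smul_smul]
  congr 1
  rw [Real.exp_neg]
  field_simp [Real.exp_ne_zero]

lemma Am_commute (i j : Fin d) : Commute (Am S d i) (Am S d j) := by
  have h : Commute (Jm S d i) (Jm S d j) := Jm_comm i j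
  exact Commute.sub_left (((h.smul_left _).smul_right _).sub_right (Commute.one_right _))
    (Commute.one_left _)

lemma comm_tAm (i : Fin d) (t : ℝ) :
    Commute (t • Am S d i) (t • (Qmat S d - Am S d i)) := by
  apply Commute.smul_left
  apply Commute.smul_right
  rw [Q_eq]
  exact (Commute.sum_right _ _ _ (fun j _ => Am_commute i j)).sub_right (Commute.refl _)

lemma pow_entry_nonneg {N : Matrix (Fin d → Fin S) (Fin d → Fin S) ℝ}
    (h : ∀ x y, 0 ≤ N x y) (n : ℕ) : ∀ x y, 0 ≤ (N ^ n) x y := by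
  induction n with
  | zero =>
    intro x y
    rw [pow_zero, Matrix.one_apply]
    split <;> norm_num
  | succ k ih =>
    intro x y
    rw [pow_succ, Matrix.mul_apply]
    exact Finset.sum_nonneg fun z _ => mul_nonneg (ih x z) (h z y)

lemma exp_entry_nonneg {N : Matrix (Fin d → Fin S) (Fin d → Fin S) ℝ}
    (h : ∀ x y, 0 ≤ N x y) (x y : Fin d → Fin S) : 0 ≤ NormedSpace.exp N x y := by
  rw [NormedSpace.exp_eq_tsum (𝕂 := ℝ)]
  beta_reduce
  have hs := exp_summable N
  have hs2 : Summable fun n : ℕ => ((n.factorial : ℝ)⁻¹ • N ^ n) x :=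
    hs.map (Pi.evalAddMonoidHom _ x) (continuous_apply x)
  erw [tsum_apply hs, tsum_apply hs2]
  apply tsum_nonneg
  intro n
  simp only [Matrix.smul_apply, smul_eq_mul]
  exact mul_nonneg (by positivity) (pow_entry_nonneg h n x y)

lemma exp_QA_nonneg (hS : 2 ≤ S) (hd : 1 ≤ d) (i : Fin d) {t : ℝ} (ht : 0 ≤ t)
    (x y : Fin d → Fin S) :
    0 ≤ NormedSpace.exp (t • (Qmat S d - Am S d i)) x y := by
  have hS0 : (0 : ℝ) < S := by
    have : (2 : ℝ) ≤ S := by exact_mod_cast hS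
    linarith
  set N : Matrix (Fin d → Fin S) (Fin d → Fin S) ℝ :=
    t • (Qmat S d - Am S d i) + (t * d) • 1 with hN
  have hNnn : ∀ x y, 0 ≤ N x y := by
    intro x y
    by_cases hxy : x = y
    · subst hxy
      have hJ : Jm S d i x x = 1 := by
        rw [Jm_apply, if_pos (Function.update_eq_self i x)]
      simp only [hN, Matrix.add_apply, Matrix.smul_apply, Matrix.sub_apply, Am, Jm_apply,
        Matrix.one_apply_eq, smul_eq_mul, Qmat, if_pos rfl, Function.update_eq_self, if_true,
        mul_one]
      have hd1 : (1 : ℝ) ≤ d := by exact_mod_cast hd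
      have hinv : 0 < (S : ℝ)⁻¹ := by positivity
      rw [one_div]
      nlinarith [mul_nonneg (mul_nonneg ht hinv.le) (sub_nonneg.2 hd1), ht]
    · have hone : (1 : Matrix (Fin d → Fin S) (Fin d → Fin S) ℝ) x y = 0 :=
        Matrix.one_apply_ne hxy
      simp only [hN, Matrix.add_apply, Matrix.smul_apply, Matrix.sub_apply, Am, Jm_apply, hone,
        smul_eq_mul, mul_zero, add_zero]
      by_cases hJ : Function.update x i (y i) = y
      · have hham : Ham x y = 1 := ham_eq_one hxy (upd_cond.mp hJ)
        rw [if_pos hJ, Qmat, if_neg hxy, if_pos hham, mul_one, one_div]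
        simp
      · rw [if_neg hJ, mul_zero, sub_zero]
        apply mul_nonneg ht
        rw [Qmat, if_neg hxy, sub_zero]
        split
        · exact le_of_lt (one_div_pos.mpr hS0)
        · exact le_rfl
  have hsplit : t • (Qmat S d - Am S d i) = N + (-(t * d)) • 1 := by
    rw [hN, neg_smul]
    abel
  have hcomm : Commute N ((-(t * d)) • (1 : Matrix (Fin d → Fin S) (Fin d → Fin S) ℝ)) :=
    (Commute.one_right N).smul_right _
  rw [hsplit, Matrix.exp_add_of_commute _ _ hcomm, exp_smul_one, mul_smul_comm, mul_one,
    Matrix.smul_apply, smul_eq_mul]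
  exact mul_nonneg (Real.exp_nonneg _) (exp_entry_nonneg hNnn x y)



/-- The discrete score function `s_t(x)_{i,x̂} = q_t(x^{\i}⊙x̂)/q_t(x)`. -/
noncomputable def score (S d : ℕ) (p : (Fin d → Fin S) → ℝ) (t : ℝ)
    (x : Fin d → Fin S) (i : Fin d) (xh : Fin S) : ℝ :=
  qmarg S d p t (Function.update x i xh) / qmarg S d p t x

/-- Score bound: `s_t(x)_{i,x̂} ≤ 1 + S/(e^t − 1)` for `t > 0`, and consequently
`s_t(x)_{i,x̂} ≤ 1 + S/(e^δ − 1)` whenever `t ≥ δ > 0`. -/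
theorem score_bound (S d : ℕ) (hS : 2 ≤ S) (hd : 1 ≤ d)
    (p : (Fin d → Fin S) → ℝ) (hp : ∀ x, 0 ≤ p x) (hp1 : ∑ x, p x = 1) :
    (∀ t : ℝ, 0 < t → ∀ (x : Fin d → Fin S) (i : Fin d) (xh : Fin S), xh ≠ x i →
      score S d p t x i xh ≤ 1 + (S : ℝ) / (Real.exp t - 1)) ∧
    (∀ δ : ℝ, 0 < δ → ∀ t : ℝ, δ ≤ t →
      ∀ (x : Fin d → Fin S) (i : Fin d) (xh : Fin S), xh ≠ x i →
      score S d p t x i xh ≤ 1 + (S : ℝ) / (Real.exp δ - 1)) := by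
  have hS0 : (0 : ℝ) < S := by
    have : (2 : ℝ) ≤ S := by exact_mod_cast hS
    linarith
  have hSne : (S : ℝ) ≠ 0 := ne_of_gt hS0
  have main : ∀ t : ℝ, 0 < t → ∀ (x : Fin d → Fin S) (i : Fin d) (xh : Fin S), xh ≠ x i →
      score S d p t x i xh ≤ 1 + (S : ℝ) / (Real.exp t - 1) := by
    intro t ht x i xh _
    have hE1 : 1 < Real.exp t := by
      have := Real.exp_lt_exp.mpr ht
      rwa [Real.exp_zero] at this
    have ha0 : 0 < Real.exp (-t) := Real.exp_pos _
    have hane : Real.exp (-t) < 1 := by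
      have := Real.exp_lt_exp.mpr (neg_lt_zero.mpr ht)
      rwa [Real.exp_zero] at this
    set a := Real.exp (-t) with ha
    set c := (1 - Real.exp (-t)) / S with hc
    have hc0 : 0 < c := div_pos (by linarith) hS0
    have key : ∀ z, qmarg S d p t z =
        a * ((NormedSpace.exp (t • (Qmat S d - Am S d i))).mulVec p) z
          + c * ∑ b : Fin S,
              ((NormedSpace.exp (t • (Qmat S d - Am S d i))).mulVec p)
                (Function.update z i b) := by
      intro z
      have hsplitQ : t • Qmat S d = t • Am S d i + t • (Qmat S d - Am S d i) := by
        rw [← smul_add]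
        congr 1
        abel
      rw [qmarg, hsplitQ, Matrix.exp_add_of_commute _ _ (comm_tAm i t),
        ← Matrix.mulVec_mulVec, exp_Am hSne i t, Matrix.add_mulVec, Matrix.smul_mulVec,
        Matrix.smul_mulVec, Matrix.one_mulVec]
      simp only [Pi.add_apply, Pi.smul_apply, smul_eq_mul]
      rw [Jm_mulVec]
    set v := (NormedSpace.exp (t • (Qmat S d - Am S d i))).mulVec p with hv
    have hvnn : ∀ y, 0 ≤ v y := by
      intro y
      rw [hv, Matrix.mulVec]
      apply Finset.sum_nonneg
      intro z _
      exact mul_nonneg (exp_QA_nonneg hS hd i ht.le y z) (hp z)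
    set T := ∑ b : Fin S, v (Function.update x i b) with hT
    have hTnn : 0 ≤ T := Finset.sum_nonneg fun b _ => hvnn _
    have hvT : v (Function.update x i xh) ≤ T :=
      Finset.single_le_sum (fun b _ => hvnn _) (Finset.mem_univ xh)
    have hqx : qmarg S d p t x = a * v x + c * T := key x
    have hqx' : qmarg S d p t (Function.update x i xh)
        = a * v (Function.update x i xh) + c * T := by
      have hupd : ∀ b : Fin S, Function.update (Function.update x i xh) i b
          = Function.update x i b := fun b => by simp
      rw [key (Function.update x i xh)]
      simp only [hupd]
      rfl
    have hCc : 1 + (S : ℝ) / (Real.exp t - 1) = (a + c) / c := by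
      rw [ha, hc, Real.exp_neg]
      have h1 : Real.exp t - 1 ≠ 0 := by linarith
      have h2 : Real.exp t ≠ 0 := Real.exp_ne_zero t
      field_simp
      ring
    rw [score, hCc]
    by_cases h0 : qmarg S d p t x = 0
    · rw [h0, div_zero]
      positivity
    · have hq0 : 0 < qmarg S d p t x := by
        refine lt_of_le_of_ne ?_ (Ne.symm h0)
        rw [hqx]
        exact add_nonneg (mul_nonneg ha0.le (hvnn x)) (mul_nonneg hc0.le hTnn)
      rw [div_le_div_iff₀ hq0 hc0, hqx, hqx']
      nlinarith [mul_le_mul_of_nonneg_left hvT (mul_nonneg ha0.le hc0.le),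
        mul_nonneg (add_nonneg ha0.le hc0.le) (mul_nonneg ha0.le (hvnn x)),
        hvnn x, hvnn (Function.update x i xh), hTnn, ha0, hc0]
  refine ⟨main, ?_⟩
  intro δ hδ t hδt x i xh hxh
  have h1 := main t (lt_of_lt_of_le hδ hδt) x i xh hxh
  have hEδ : 1 < Real.exp δ := by
    have := Real.exp_lt_exp.mpr hδ
    rwa [Real.exp_zero] at this
  have h2 : (S : ℝ) / (Real.exp t - 1) ≤ (S : ℝ) / (Real.exp δ - 1) := by
    gcongr
  linarith
end

section
/- If p_data satisfies Assumption 2 with constant L, then for every t ≥ 0, every x ∈ X, every i ∈ [d] and every x̂ ∈ [S] with x̂ ≠ x^i: s_t(x)_{i,x̂} = q_t(x^{\i}⊙x̂)/q_t(x) ≤ L. -/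
open scoped BigOperators

section Aux

variable {ι : Type*} [Fintype ι] [DecidableEq ι]

lemma matExpSummable (M : Matrix ι ι ℝ) :
    Summable fun k : ℕ => ((Nat.factorial k : ℝ))⁻¹ • M ^ k := by
  letI : SeminormedRing (Matrix ι ι ℝ) := Matrix.linftyOpSemiNormedRing
  letI : NormedRing (Matrix ι ι ℝ) := Matrix.linftyOpNormedRing
  letI : NormedAlgebra ℝ (Matrix ι ι ℝ) := Matrix.linftyOpNormedAlgebra
  exact NormedSpace.expSeries_summable' (𝕂 := ℝ) M

lemma matEntrySummable (M : Matrix ι ι ℝ) (y z : ι) :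
    Summable fun k : ℕ => ((Nat.factorial k : ℝ))⁻¹ • (M ^ k) y z := by
  have h := matExpSummable M
  have h1 : Summable fun k : ℕ => (((Nat.factorial k : ℝ))⁻¹ • M ^ k) y := Pi.summable.mp h y
  have h2 := Pi.summable.mp h1 z
  exact h2

lemma matExp_apply (M : Matrix ι ι ℝ) (y z : ι) :
    NormedSpace.exp M y z = ∑' k : ℕ, ((Nat.factorial k : ℝ))⁻¹ • (M ^ k) y z := by
  rw [NormedSpace.exp_eq_tsum ℝ]
  show (∑' k : ℕ, ((Nat.factorial k : ℝ))⁻¹ • M ^ k) y z = _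
  erw [tsum_apply (matExpSummable M), tsum_apply (Pi.summable.mp (matExpSummable M) y)]
  rfl

lemma pow_entry_nonneg_s7 {M : Matrix ι ι ℝ} (h : ∀ y z, 0 ≤ M y z) (k : ℕ) :
    ∀ y z, 0 ≤ (M ^ k) y z := by
  induction k with
  | zero => intro y z; simp [Matrix.one_apply]; positivity
  | succ k ih =>
      intro y z
      rw [pow_succ, Matrix.mul_apply]
      exact Finset.sum_nonneg fun w _ => mul_nonneg (ih y w) (h w z)

lemma matExp_entry_nonneg {M : Matrix ι ι ℝ} (h : ∀ y z, 0 ≤ M y z) (y z : ι) :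
    0 ≤ NormedSpace.exp M y z := by
  rw [matExp_apply]
  refine tsum_nonneg fun k => ?_
  exact smul_nonneg (by positivity) (pow_entry_nonneg_s7 h k y z)

lemma matExp_diag_one_le {M : Matrix ι ι ℝ} (h : ∀ y z, 0 ≤ M y z) (y : ι) :
    1 ≤ NormedSpace.exp M y y := by
  rw [matExp_apply]
  have h0 : ((Nat.factorial 0 : ℝ))⁻¹ • (M ^ 0) y y = 1 := by simp [Matrix.one_apply]
  calc (1 : ℝ) = ((Nat.factorial 0 : ℝ))⁻¹ • (M ^ 0) y y := h0.symm
    _ ≤ ∑' k : ℕ, ((Nat.factorial k : ℝ))⁻¹ • (M ^ k) y y := by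
        refine Summable.le_tsum (matEntrySummable M y y) 0 fun k _ => ?_
        exact smul_nonneg (by positivity) (pow_entry_nonneg_s7 h k y y)

lemma pow_equivariant {M : Matrix ι ι ℝ} (g : ι ≃ ι)
    (hM : ∀ y z, M (g y) (g z) = M y z) (k : ℕ) :
    ∀ y z, (M ^ k) (g y) (g z) = (M ^ k) y z := by
  induction k with
  | zero => intro y z; simp [Matrix.one_apply, g.injective.eq_iff]
  | succ k ih =>
      intro y z
      rw [pow_succ, Matrix.mul_apply, Matrix.mul_apply,
        ← Equiv.sum_comp g (fun w => (M ^ k) (g y) w * M w (g z))]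
      exact Finset.sum_congr rfl fun w _ => by rw [ih, hM]

lemma matExp_equivariant {M : Matrix ι ι ℝ} (g : ι ≃ ι)
    (hM : ∀ y z, M (g y) (g z) = M y z) (y z : ι) :
    NormedSpace.exp M (g y) (g z) = NormedSpace.exp M y z := by
  rw [matExp_apply, matExp_apply]
  exact tsum_congr fun k => by rw [pow_equivariant g hM k]

lemma pi_exp_apply (f : ι → ℝ) (x : ι) :
    NormedSpace.exp f x = Real.exp (f x) := by
  have hsum : Summable fun k : ℕ => ((Nat.factorial k : ℝ))⁻¹ • f ^ k :=
    NormedSpace.expSeries_summable' (𝕂 := ℝ) f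
  rw [Real.exp_eq_exp_ℝ, NormedSpace.exp_eq_tsum ℝ, NormedSpace.exp_eq_tsum ℝ]
  show (∑' k : ℕ, ((Nat.factorial k : ℝ))⁻¹ • f ^ k) x = _
  rw [tsum_apply hsum]
  rfl

end Aux

/-- Under Assumption 2 (full support and score of the data distribution bounded by `L`),
the score along the whole forward process is bounded by `L`. -/
theorem score_bound_of_data_score_bound (S d : ℕ) (hS : 2 ≤ S) (hd : 1 ≤ d)
    (p : (Fin d → Fin S) → ℝ) (hp : ∀ x, 0 < p x) (hp1 : ∑ x, p x = 1)
    (L : ℝ) (hL : 0 < L)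
    (hscore : ∀ (x : Fin d → Fin S) (i : Fin d) (xh : Fin S), xh ≠ x i →
      p (Function.update x i xh) / p x ≤ L)
    (t : ℝ) (ht : 0 ≤ t)
    (x : Fin d → Fin S) (i : Fin d) (xh : Fin S) (hxh : xh ≠ x i) :
    score S d p t x i xh ≤ L := by
  classical
  -- L ≥ 1
  have hL1 : 1 ≤ L := by
    have h1 := hscore x i xh hxh
    have h2 : p x / p (Function.update x i xh) ≤ L := by
      have := hscore (Function.update x i xh) i (x i)
        (by simpa [Function.update_self] using hxh.symm)
      simpa [Function.update_idem, Function.update_eq_self] using this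
    have hpx := hp x
    have hpu := hp (Function.update x i xh)
    have e1 : p (Function.update x i xh) ≤ L * p x := by
      rwa [div_le_iff₀ hpx] at h1
    have e2 : p x ≤ L * p (Function.update x i xh) := by
      rwa [div_le_iff₀ hpu] at h2
    nlinarith
  set a := x i with ha
  set b := xh with hb
  -- the swap involution
  set T : (Fin d → Fin S) → (Fin d → Fin S) :=
    fun y => Function.update y i (Equiv.swap a b (y i)) with hT
  have hTapp : ∀ (y : Fin d → Fin S) (j : Fin d),
      T y j = if j = i then Equiv.swap a b (y i) else y j := by
    intro y j
    simp [hT, Function.update_apply]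
  have hTinv : Function.Involutive T := by
    intro y
    funext j
    rcases eq_or_ne j i with rfl | hj
    · simp [hT]
    · simp [hT, Function.update_of_ne hj]
  set g : Equiv.Perm (Fin d → Fin S) := hTinv.toPerm with hg
  have hgapp : ∀ y, g y = T y := fun y => rfl
  -- Ham is preserved
  have hham : ∀ y z, Ham (T y) (T z) = Ham y z := by
    intro y z
    unfold Ham
    congr 1
    refine Finset.filter_congr fun j _ => ?_
    rcases eq_or_ne j i with rfl | hj
    · simp [hTapp, (Equiv.swap a b).injective.ne_iff]
    · simp [hTapp, hj]
  have hTinj : Function.Injective T := hTinv.injective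
  -- Q is equivariant
  have hQ : ∀ y z, Qmat S d (T y) (T z) = Qmat S d y z := by
    intro y z
    have h1 : (T y = T z) ↔ (y = z) := hTinj.eq_iff
    simp only [Qmat, hham, h1]
  have hM : ∀ y z, (t • Qmat S d) (T y) (T z) = (t • Qmat S d) y z := by
    intro y z
    simp only [Matrix.smul_apply, hQ, smul_eq_mul]
  set E := NormedSpace.exp (t • Qmat S d) with hE
  have hEeq : ∀ y z, E (T y) (T z) = E y z := by
    intro y z
    have := matExp_equivariant (g : (Fin d → Fin S) ≃ (Fin d → Fin S)) hM y z
    simpa [hgapp] using this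
  -- nonnegativity of E via shift by a scalar matrix
  set c : ℝ := (1 - 1 / (S : ℝ)) * d with hc
  have hSpos : (0 : ℝ) < S := by positivity
  have hc0 : 0 ≤ c := by
    have : 1 / (S : ℝ) ≤ 1 := by
      rw [div_le_one hSpos]
      exact_mod_cast Nat.one_le_of_lt hS
    have hd0 : (0 : ℝ) ≤ d := by positivity
    nlinarith
  set N : Matrix (Fin d → Fin S) (Fin d → Fin S) ℝ :=
    t • Qmat S d + (t * c) • 1 with hN
  have hNnn : ∀ y z, 0 ≤ N y z := by
    intro y z
    rcases eq_or_ne y z with rfl | hyz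
    · have : N y y = t * ((1 / (S : ℝ) - 1) * d) + t * c := by
        simp [hN, Qmat, Matrix.one_apply]
      rw [this, hc]
      ring_nf
      nlinarith [mul_nonneg ht hc0]
    · have : N y z = t * Qmat S d y z := by
        simp [hN, Qmat, Matrix.one_apply, hyz]
      rw [this]
      refine mul_nonneg ht ?_
      simp only [Qmat, if_neg hyz]
      split <;> positivity
  have hcomm : Commute (t • Qmat S d) ((t * c) • (1 : Matrix (Fin d → Fin S) (Fin d → Fin S) ℝ)) :=
    (Commute.one_right (t • Qmat S d)).smul_right (t * c)
  have hsplit : NormedSpace.exp N = E * NormedSpace.exp ((t * c) • 1) := by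
    rw [hN, Matrix.exp_add_of_commute _ _ hcomm]
  have hdiag : ((t * c) • (1 : Matrix (Fin d → Fin S) (Fin d → Fin S) ℝ)) =
      Matrix.diagonal (fun _ => t * c) := by
    ext y z
    rcases eq_or_ne y z with rfl | hyz
    · simp [Matrix.one_apply]
    · simp [Matrix.one_apply, hyz, Matrix.diagonal_apply_ne _ hyz]
  have hexpdiag : NormedSpace.exp ((t * c) • (1 : Matrix (Fin d → Fin S) (Fin d → Fin S) ℝ)) =
      Matrix.diagonal (fun _ => Real.exp (t * c)) := by
    rw [hdiag, Matrix.exp_diagonal]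
    have h9 : (NormedSpace.exp fun _ : (Fin d → Fin S) => t * c) =
        fun _ : (Fin d → Fin S) => Real.exp (t * c) :=
      funext fun y => pi_exp_apply _ y
    rw [h9]
  have hEentry : ∀ y z, NormedSpace.exp N y z = E y z * Real.exp (t * c) := by
    intro y z
    rw [hsplit, hexpdiag, Matrix.mul_diagonal]
  have hexppos : (0 : ℝ) < Real.exp (t * c) := Real.exp_pos _
  have hEnn : ∀ y z, 0 ≤ E y z := by
    intro y z
    have h1 : 0 ≤ NormedSpace.exp N y z := matExp_entry_nonneg hNnn y z
    rw [hEentry y z] at h1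
    nlinarith
  have hEdiag : ∀ y, 0 < E y y := by
    intro y
    have h1 : 1 ≤ NormedSpace.exp N y y := matExp_diag_one_le hNnn y
    rw [hEentry y y] at h1
    nlinarith
  -- positivity of the marginal
  have hq : ∀ y, 0 < qmarg S d p t y := by
    intro y
    have hterm : ∀ z ∈ Finset.univ, 0 ≤ E y z * p z :=
      fun z _ => mul_nonneg (hEnn y z) (hp z).le
    have h1 : E y y * p y ≤ ∑ z, E y z * p z :=
      Finset.single_le_sum hterm (Finset.mem_univ y)
    have h2 : 0 < E y y * p y := mul_pos (hEdiag y) (hp y)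
    have : qmarg S d p t y = ∑ z, E y z * p z := rfl
    rw [this]
    linarith
  -- p (T z) ≤ L * p z
  have hpT : ∀ z, p (T z) ≤ L * p z := by
    intro z
    rcases eq_or_ne (z i) a with h1 | h1
    · have hTz : T z = Function.update z i b := by
        simp [hT, h1]
      have hb' : b ≠ z i := by rw [h1]; exact hxh
      have := hscore z i b hb'
      rw [hTz]
      rwa [div_le_iff₀ (hp z)] at this
    · rcases eq_or_ne (z i) b with h2 | h2
      · have hTz : T z = Function.update z i a := by
          simp [hT, h2]
        have ha' : a ≠ z i := by rw [h2]; exact hxh.symm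
        have := hscore z i a ha'
        rw [hTz]
        rwa [div_le_iff₀ (hp z)] at this
      · have hTz : T z = z := by
          rw [hT]
          simp only
          rw [Equiv.swap_apply_of_ne_of_ne h1 h2, Function.update_eq_self]
        rw [hTz]
        nlinarith [hp z]
  -- the key bound
  have hTx : Function.update x i xh = T x := by
    simp [hT, ← ha, hb]
  have hbound : qmarg S d p t (T x) ≤ L * qmarg S d p t x := by
    have h1 : qmarg S d p t (T x) = ∑ z, E (T x) z * p z := rfl
    have h2 : qmarg S d p t x = ∑ z, E x z * p z := rfl
    rw [h1, h2]
    have h3 : ∑ z, E (T x) z * p z = ∑ z, E (T x) (T z) * p (T z) := by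
      rw [← Equiv.sum_comp g (fun z => E (T x) z * p z)]
      exact Finset.sum_congr rfl fun z _ => by rw [hgapp]
    rw [h3, Finset.mul_sum]
    refine Finset.sum_le_sum fun z _ => ?_
    rw [hEeq x z]
    calc E x z * p (T z) ≤ E x z * (L * p z) :=
          mul_le_mul_of_nonneg_left (hpT z) (hEnn x z)
      _ = L * (E x z * p z) := by ring
  rw [score, hTx, div_le_iff₀ (hq x)]
  exact hbound
end

section
/- Let h > 0, δ ≥ 0 and let k be a nonnegative integer with kh + δ > 0. Then for every t ∈ [kh+δ, (k+1)h+δ] and all x ≠ y in [S]: (i) q_t(y)/q_t(x) ≤ 1 + S/(e^{kh+δ} − 1); and (ii) | q_t(y)/q_t(x) − q_{(k+1)h+δ}(y)/q_{(k+1)h+δ}(x) | ≤ S·h·e^{−(kh+δ)}/(1 − e^{−(kh+δ)})². -/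
open scoped BigOperators

/-- The one-dimensional forward marginal `q_t = e^{−t}·p + (1 − e^{−t})·(1/S)·1`. -/
noncomputable def qone (S : ℕ) (p : Fin S → ℝ) (t : ℝ) : Fin S → ℝ :=
  fun x => Real.exp (-t) * p x + (1 - Real.exp (-t)) * (1 / (S : ℝ))

set_option maxHeartbeats 1000000 in
/-- One-dimensional score bound and score movement bound on the interval
`[kh+δ, (k+1)h+δ]` with `kh+δ > 0`. -/
theorem one_dim_score_bounds (S : ℕ) (hS : 2 ≤ S)
    (p : Fin S → ℝ) (hp : ∀ x, 0 ≤ p x) (hp1 : ∑ x, p x = 1)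
    (h δ : ℝ) (hh : 0 < h) (hδ : 0 ≤ δ) (k : ℕ) (hpos : 0 < k * h + δ)
    (t : ℝ) (ht : t ∈ Set.Icc (k * h + δ) ((k + 1) * h + δ))
    (x y : Fin S) (hxy : x ≠ y) :
    qone S p t y / qone S p t x ≤ 1 + (S : ℝ) / (Real.exp (k * h + δ) - 1) ∧
    |qone S p t y / qone S p t x -
        qone S p ((k + 1) * h + δ) y / qone S p ((k + 1) * h + δ) x| ≤
      (S : ℝ) * h * Real.exp (-(k * h + δ)) / (1 - Real.exp (-(k * h + δ))) ^ 2 := by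
  obtain ⟨ht1, ht2⟩ := ht
  set a : ℝ := k * h + δ with ha
  set T : ℝ := (k + 1) * h + δ with hTdef
  have hS0 : (0:ℝ) < S := by
    have : (2:ℝ) ≤ S := by exact_mod_cast hS
    linarith
  have hTa : a + h = T := by rw [ha, hTdef]; ring
  have hEa1 : Real.exp (-a) < 1 := by
    rw [Real.exp_lt_one_iff]; linarith
  have h1a : (0:ℝ) < 1 - Real.exp (-a) := by linarith
  have hp1' : ∀ z, p z ≤ 1 := by
    intro z
    calc p z ≤ ∑ w, p w := Finset.single_le_sum (fun i _ => hp i) (Finset.mem_univ z)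
      _ = 1 := hp1
  -- lower bound for qone at any s ≥ a
  have hlow : ∀ s : ℝ, a ≤ s → ∀ z, (1 - Real.exp (-a)) / S ≤ qone S p s z := by
    intro s hs z
    have hE : Real.exp (-s) ≤ Real.exp (-a) := Real.exp_le_exp.2 (by linarith)
    have h1 : 0 ≤ Real.exp (-s) * p z := mul_nonneg (Real.exp_pos _).le (hp z)
    have h2 : (1 - Real.exp (-a)) / S ≤ (1 - Real.exp (-s)) * (1 / S) := by
      rw [div_eq_mul_one_div]
      exact mul_le_mul_of_nonneg_right (by linarith) (by positivity)
    unfold qone; linarith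
  have hlowpos : (0:ℝ) < (1 - Real.exp (-a)) / S := by positivity
  have hqtx : (1 - Real.exp (-a)) / S ≤ qone S p t x := hlow t ht1 x
  have hqTx : (1 - Real.exp (-a)) / S ≤ qone S p T x := hlow T (by linarith) x
  have hqtxpos : 0 < qone S p t x := lt_of_lt_of_le hlowpos hqtx
  have hqTxpos : 0 < qone S p T x := lt_of_lt_of_le hlowpos hqTx
  -- upper bound
  have hup : qone S p t y ≤ Real.exp (-t) + (1 - Real.exp (-t)) * (1 / S) := by
    unfold qone
    have h1 := hp1' y
    have h2 := (Real.exp_pos (-t)).le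
    nlinarith
  have hea : (1:ℝ) < Real.exp a := by
    rw [← Real.exp_zero]
    exact Real.exp_lt_exp.2 hpos
  have heapos : (0:ℝ) < Real.exp a - 1 := by linarith
  constructor
  · -- part (i)
    rw [div_le_iff₀ hqtxpos]
    have hED : Real.exp (-t) * (Real.exp a - 1) ≤ 1 - Real.exp (-t) := by
      have h1 : Real.exp (-t) * Real.exp a ≤ Real.exp (-t) * Real.exp t :=
        mul_le_mul_of_nonneg_left (Real.exp_le_exp.2 ht1) (Real.exp_pos _).le
      have h2 : Real.exp (-t) * Real.exp t = 1 := by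
        rw [← Real.exp_add]; norm_num
      nlinarith
    have hqtxt : (1 - Real.exp (-t)) / S ≤ qone S p t x := by
      unfold qone
      have h0 : 0 ≤ Real.exp (-t) * p x := mul_nonneg (Real.exp_pos _).le (hp x)
      have h0' : (1 - Real.exp (-t)) / S = (1 - Real.exp (-t)) * (1 / S) := by ring
      linarith [h0'.le]
    have h2 : Real.exp (-t) ≤ (S:ℝ) / (Real.exp a - 1) * qone S p t x := by
      have heq : (S:ℝ) / (Real.exp a - 1) * ((1 - Real.exp (-t)) / S)
          = (1 - Real.exp (-t)) / (Real.exp a - 1) := by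
        field_simp
      calc Real.exp (-t) ≤ (1 - Real.exp (-t)) / (Real.exp a - 1) := by
            rw [le_div_iff₀ heapos]; exact hED
        _ = (S:ℝ) / (Real.exp a - 1) * ((1 - Real.exp (-t)) / S) := heq.symm
        _ ≤ (S:ℝ) / (Real.exp a - 1) * qone S p t x :=
            mul_le_mul_of_nonneg_left hqtxt (by positivity)
    have hqtx' : (1 - Real.exp (-t)) * (1 / S) ≤ qone S p t x := by
      unfold qone
      have : 0 ≤ Real.exp (-t) * p x := mul_nonneg (Real.exp_pos _).le (hp x)
      linarith
    have hexp : (1 + (S:ℝ) / (Real.exp a - 1)) * qone S p t x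
        = qone S p t x + (S:ℝ) / (Real.exp a - 1) * qone S p t x := by ring
    rw [hexp]
    linarith
  · -- part (ii)
    set u : ℝ := Real.exp (-t) with hu
    set v : ℝ := Real.exp (-T) with hv
    -- key numerator identity
    have hnum : qone S p t y * qone S p T x - qone S p T y * qone S p t x
        = (1 / S) * (p y - p x) * (u - v) := by
      unfold qone; ring
    have hdiff : qone S p t y / qone S p t x - qone S p T y / qone S p T x
        = (qone S p t y * qone S p T x - qone S p T y * qone S p t x)
          / (qone S p t x * qone S p T x) := by
      rw [div_sub_div _ _ hqtxpos.ne' hqTxpos.ne']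
      ring_nf
    -- bound on u - v
    have huv0 : 0 ≤ u - v := by
      have : v ≤ u := Real.exp_le_exp.2 (by linarith)
      linarith
    have huv : u - v ≤ Real.exp (-a) * h := by
      have h1 : v = u * Real.exp (t - T) := by
        rw [hu, hv, ← Real.exp_add]; ring_nf
      have h2 : 1 + (t - T) ≤ Real.exp (t - T) := by linarith [Real.add_one_le_exp (t - T)]
      have h3 : u ≤ Real.exp (-a) := Real.exp_le_exp.2 (by linarith)
      have h4 : T - t ≤ h := by linarith
      have h5 : 0 < u := Real.exp_pos _
      have h6 : (0:ℝ) < Real.exp (-a) := Real.exp_pos _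
      have h9 : Real.exp (t - T) ≤ 1 := by
        rw [← Real.exp_zero]; exact Real.exp_le_exp.2 (by linarith)
      have h7 : u * (1 - Real.exp (t - T)) ≤ Real.exp (-a) * h :=
        mul_le_mul h3 (by linarith) (by linarith) h6.le
      have h8 : u - v = u * (1 - Real.exp (t - T)) := by rw [h1]; ring
      linarith
    have hpyx : |p y - p x| ≤ 1 := by
      rw [abs_le]
      constructor <;> [linarith [hp1' x, hp y]; linarith [hp1' y, hp x]]
    -- bound on |numerator|
    have hnumabs : |qone S p t y * qone S p T x - qone S p T y * qone S p t x|
        ≤ (1 / S) * (Real.exp (-a) * h) := by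
      rw [hnum, abs_mul, abs_mul]
      have h1 : |(1:ℝ) / S| = 1 / S := abs_of_pos (by positivity)
      have h2 : |u - v| = u - v := abs_of_nonneg huv0
      rw [h1, h2]
      have : |p y - p x| * (u - v) ≤ 1 * (Real.exp (-a) * h) := by
        apply mul_le_mul hpyx huv huv0 one_pos.le
      calc 1 / (S:ℝ) * |p y - p x| * (u - v)
          = 1 / (S:ℝ) * (|p y - p x| * (u - v)) := by ring
        _ ≤ 1 / (S:ℝ) * (1 * (Real.exp (-a) * h)) :=
            mul_le_mul_of_nonneg_left this (by positivity)
        _ = 1 / (S:ℝ) * (Real.exp (-a) * h) := by ring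
    -- denominator lower bound
    have hden : ((1 - Real.exp (-a)) / S) ^ 2 ≤ qone S p t x * qone S p T x := by
      have := mul_le_mul hqtx hqTx hlowpos.le hqtxpos.le
      nlinarith
    have hdenpos : (0:ℝ) < ((1 - Real.exp (-a)) / S) ^ 2 := by positivity
    rw [hdiff, abs_div, abs_of_pos (mul_pos hqtxpos hqTxpos)]
    calc |qone S p t y * qone S p T x - qone S p T y * qone S p t x|
          / (qone S p t x * qone S p T x)
        ≤ (1 / S * (Real.exp (-a) * h)) / (((1 - Real.exp (-a)) / S) ^ 2) :=
          div_le_div₀ (by positivity) hnumabs hdenpos hden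
      _ = (S:ℝ) * h * Real.exp (-a) / (1 - Real.exp (-a)) ^ 2 := by
          field_simp
end

section
/- For every integer S ≥ 2 and all T > 0, h > 0, δ ≥ 0, there exists t₀ > T such that for every t' ≥ t₀, every nonnegative integer k and every t ∈ [kh+δ, (k+1)h+δ] with (k+1)h+δ ≤ T, and for all x ≠ y in [S] and all x' ∈ [S]: (i) | r_{t'−t}(x'|y)/r_{t'−t}(x'|x) − r_{t'−((k+1)h+δ)}(x'|y)/r_{t'−((k+1)h+δ)}(x'|x) | ≤ 8·S·h; and (ii) r_{t'−t}(x'|y)/r_{t'−t}(x'|x) ≤ 2. -/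
open scoped BigOperators

/-- The one-dimensional forward transition kernel of the uniform-rate chain:
`r_τ(x'|x) = (1/S)·(1 + e^{−τ}·(−1 + S·δ{x',x}))`. -/
noncomputable def rker (S : ℕ) (τ : ℝ) (x' x : Fin S) : ℝ :=
  (1 / (S : ℝ)) * (1 + Real.exp (-τ) * (-1 + (S : ℝ) * (if x' = x then 1 else 0)))

lemma rker_ratio (S : ℕ) (hS : 2 ≤ S) (τ : ℝ) (x y x' : Fin S) :
    rker S τ x' y / rker S τ x' x =
      (1 + Real.exp (-τ) * (-1 + (S : ℝ) * (if x' = y then 1 else 0))) /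
        (1 + Real.exp (-τ) * (-1 + (S : ℝ) * (if x' = x then 1 else 0))) := by
  have hS0 : (0:ℝ) < (S:ℝ) := by
    have : 0 < S := by omega
    exact_mod_cast this
  unfold rker
  rw [mul_div_mul_left _ _ (show (1:ℝ)/(S:ℝ) ≠ 0 by positivity)]

lemma ratio_bounds (S : ℕ) (hS : 2 ≤ S) (h a : ℝ) (ha : 0 < a) (hah : a ≤ h)
    (haS : a ≤ 1 / (2 * S)) (u v : ℝ) (hu : u = 0 ∨ u = 1) (hv : v = 0 ∨ v = 1)
    (huv : u = 0 ∨ v = 0) :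
    |(1 + a * (-1 + (S:ℝ) * u)) / (1 + a * (-1 + (S:ℝ) * v)) - 1| ≤ 4 * S * h ∧
      (1 + a * (-1 + (S:ℝ) * u)) / (1 + a * (-1 + (S:ℝ) * v)) ≤ 2 := by
  have hS2 : (2:ℝ) ≤ (S:ℝ) := by exact_mod_cast hS
  have hSpos : (0:ℝ) < (S:ℝ) := by linarith
  have haS' : a * (2 * (S:ℝ)) ≤ 1 := by
    rw [le_div_iff₀ (by positivity)] at haS
    linarith
  have haS'' : a * (S:ℝ) ≤ 1/2 := by linarith
  have haq : a ≤ 1/4 := by nlinarith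
  have hh : 0 < h := lt_of_lt_of_le ha hah
  have hShpos : (0:ℝ) < 4 * S * h := by positivity
  rcases hu with hu | hu <;> rcases hv with hv | hv <;> subst hu <;> subst hv
  · -- u=0, v=0 : ratio = 1
    have hne : (1 + a * (-1 + (S:ℝ) * 0)) ≠ 0 := by nlinarith
    rw [div_self hne]
    constructor
    · simp; positivity
    · norm_num
  · -- u=0, v=1 : ratio = (1-a)/(1+a(S-1))
    have hden : (0:ℝ) < 1 + a * (-1 + (S:ℝ) * 1) := by nlinarith
    constructor
    · rw [abs_le]
      constructor
      · rw [le_sub_iff_add_le, le_div_iff₀ hden]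
        nlinarith [mul_nonneg (mul_nonneg (by linarith : (0:ℝ) ≤ 4*(S:ℝ)) hh.le)
          (mul_nonneg ha.le (by linarith : (0:ℝ) ≤ (S:ℝ) - 1))]
      · rw [sub_le_iff_le_add, div_le_iff₀ hden]
        nlinarith [mul_nonneg (mul_nonneg (by linarith : (0:ℝ) ≤ 4*(S:ℝ)) hh.le)
          (mul_nonneg ha.le (by linarith : (0:ℝ) ≤ (S:ℝ) - 1))]
    · rw [div_le_iff₀ hden]; nlinarith
  · -- u=1, v=0 : ratio = (1+a(S-1))/(1-a)
    have hden : (0:ℝ) < 1 + a * (-1 + (S:ℝ) * 0) := by nlinarith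
    constructor
    · rw [abs_le]
      constructor
      · rw [le_sub_iff_add_le, le_div_iff₀ hden]
        nlinarith
      · rw [sub_le_iff_le_add, div_le_iff₀ hden]
        nlinarith [mul_nonneg (mul_nonneg (by linarith : (0:ℝ) ≤ 4*(S:ℝ)) hh.le) ha.le]
    · rw [div_le_iff₀ hden]; nlinarith
  · simp at huv

/-- Stability of the backward transition-kernel ratios for large reference time `t'`. -/
theorem kernel_ratio_bounds (S : ℕ) (hS : 2 ≤ S)
    (T h δ : ℝ) (hT : 0 < T) (hh : 0 < h) (hδ : 0 ≤ δ) :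
    ∃ t₀ : ℝ, T < t₀ ∧ ∀ t' : ℝ, t₀ ≤ t' →
      ∀ (k : ℕ) (t : ℝ), t ∈ Set.Icc (k * h + δ) ((k + 1) * h + δ) →
        (k + 1) * h + δ ≤ T →
        ∀ x y x' : Fin S, x ≠ y →
          |rker S (t' - t) x' y / rker S (t' - t) x' x -
              rker S (t' - ((k + 1) * h + δ)) x' y /
                rker S (t' - ((k + 1) * h + δ)) x' x| ≤ 8 * (S : ℝ) * h ∧
          rker S (t' - t) x' y / rker S (t' - t) x' x ≤ 2 := by
  have hS2 : (2:ℝ) ≤ (S:ℝ) := by exact_mod_cast hS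
  set c : ℝ := min h (1 / (2 * S)) with hc_def
  have hc : 0 < c := lt_min hh (by positivity)
  have hc1 : c ≤ 1 := le_trans (min_le_right _ _) (by
    rw [div_le_one (by positivity)]; linarith)
  refine ⟨T + 1 - Real.log c, ?_, ?_⟩
  · have : Real.log c ≤ 0 := Real.log_nonpos (le_of_lt hc) hc1
    linarith
  intro t' ht' k t ht hkT x y x' hxy
  -- key fact : for s ≤ T, exp (-(t'-s)) ≤ c
  have key : ∀ s : ℝ, s ≤ T → Real.exp (-(t' - s)) ≤ c := by
    intro s hs
    have h1 : -(t' - s) ≤ Real.log c - 1 := by linarith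
    calc Real.exp (-(t' - s)) ≤ Real.exp (Real.log c - 1) := Real.exp_le_exp.mpr h1
      _ = c * Real.exp (-1) := by
          rw [Real.exp_sub, Real.exp_log hc, Real.exp_neg]; ring
      _ ≤ c * 1 := by
          apply mul_le_mul_of_nonneg_left _ (le_of_lt hc)
          exact Real.exp_le_one_iff.mpr (by norm_num)
      _ = c := mul_one c
  have ht1 : t ≤ T := le_trans ht.2 hkT
  have ha1 := key t ht1
  have ha2 := key ((k + 1) * h + δ) hkT
  set u : ℝ := if x' = y then 1 else 0 with hu_def
  set v : ℝ := if x' = x then 1 else 0 with hv_def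
  have hu : u = 0 ∨ u = 1 := by rw [hu_def]; split <;> simp
  have hv : v = 0 ∨ v = 1 := by rw [hv_def]; split <;> simp
  have huv : u = 0 ∨ v = 0 := by
    by_cases hxy' : x' = y
    · right
      have hne : x' ≠ x := by rw [hxy']; exact fun hyx => hxy hyx.symm
      rw [hv_def, if_neg hne]
    · left
      rw [hu_def, if_neg hxy']
  have hch : c ≤ h := min_le_left _ _
  have hcS : c ≤ 1 / (2 * S) := min_le_right _ _
  have B1 := ratio_bounds S hS h (Real.exp (-(t' - t))) (Real.exp_pos _)
    (le_trans ha1 hch) (le_trans ha1 hcS) u v hu hv huv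
  have B2 := ratio_bounds S hS h (Real.exp (-(t' - ((k + 1) * h + δ)))) (Real.exp_pos _)
    (le_trans ha2 hch) (le_trans ha2 hcS) u v hu hv huv
  rw [rker_ratio S hS, rker_ratio S hS, ← hu_def, ← hv_def]
  have tri : ∀ A B : ℝ, |A - B| ≤ |A - 1| + |B - 1| := by
    intro A B
    have := abs_sub_le A 1 B
    rwa [abs_sub_comm 1 B] at this
  refine ⟨le_trans (tri _ _) ?_, B1.2⟩
  have e1 := B1.1
  have e2 := B2.1
  linarith
end

section
/- Suppose p(x) > 0 for every x ∈ [S] and let κ := (max_{x} p(x))/(min_{x} p(x)). Then for every h > 0, every nonnegative integer k, every t ∈ [kh, (k+1)h] and all x ≠ y in [S]: (i) q_t(y)/q_t(x) ≤ κ; and (ii) | q_t(y)/q_t(x) − q_{(k+1)h}(y)/q_{(k+1)h}(x) | ≤ κ·h/(1 − e^{−(k+1)h}). -/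
open scoped BigOperators

/-- One-dimensional score bound and score movement bound without early stopping,
for a strictly positive data distribution, in terms of `κ = (max p)/(min p)`. -/
theorem one_dim_score_bounds_full_support (S : ℕ) (hS : 2 ≤ S)
    (p : Fin S → ℝ) (hp : ∀ x, 0 < p x) (hp1 : ∑ x, p x = 1)
    (κ : ℝ) (hκ : κ = (⨆ x, p x) / (⨅ x, p x))
    (h : ℝ) (hh : 0 < h) (k : ℕ)
    (t : ℝ) (ht : t ∈ Set.Icc (k * h) ((k + 1) * h))
    (x y : Fin S) (hxy : x ≠ y) :
    qone S p t y / qone S p t x ≤ κ ∧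
    |qone S p t y / qone S p t x -
        qone S p ((k + 1) * h) y / qone S p ((k + 1) * h) x| ≤
      κ * h / (1 - Real.exp (-((k + 1) * h))) := by
  obtain ⟨ht0, ht1⟩ := ht
  haveI : Nonempty (Fin S) := ⟨⟨0, by omega⟩⟩
  set t₁ : ℝ := ((k : ℝ) + 1) * h with ht₁def
  set m : ℝ := ⨅ x, p x with hmdef
  set M : ℝ := ⨆ x, p x with hMdef
  obtain ⟨i, hi⟩ := exists_eq_ciInf_of_finite (f := p)
  have hm0 : 0 < m := by rw [hmdef, ← hi]; exact hp i
  have hle : ∀ z, m ≤ p z := fun z => ciInf_le (Finite.bddBelow_range p) z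
  have hge : ∀ z, p z ≤ M := fun z => le_ciSup (Finite.bddAbove_range p) z
  have hmM : m ≤ M := le_trans (hle i) (hge i)
  have hM0 : 0 < M := lt_of_lt_of_le hm0 hmM
  have hκ1 : (1 : ℝ) ≤ κ := by rw [hκ]; exact (one_le_div hm0).2 hmM
  have hκm : κ * m = M := by rw [hκ]; field_simp
  have hS0 : (0 : ℝ) < S := by
    have : (2 : ℝ) ≤ S := by exact_mod_cast hS
    linarith
  have ht0' : (0 : ℝ) ≤ t := le_trans (by positivity) ht0
  have ht₁pos : (0 : ℝ) < t₁ := by rw [ht₁def]; positivity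
  have htt₁ : t ≤ t₁ := ht1
  have hdt : t₁ - t ≤ h := by
    have : (k : ℝ) * h ≤ t := ht0
    rw [ht₁def]; nlinarith
  -- positivity of qone
  have hq : ∀ s : ℝ, 0 ≤ s → ∀ z : Fin S, 0 < qone S p s z := by
    intro s hs z
    unfold qone
    have h1 : Real.exp (-s) ≤ 1 := Real.exp_le_one_iff.2 (by linarith)
    have h2 : 0 < Real.exp (-s) := Real.exp_pos _
    have := hp z
    have hSinv : (0 : ℝ) < 1 / (S : ℝ) := by positivity
    nlinarith
  have hqx := hq t ht0' x
  have hqx1 := hq t₁ (le_of_lt ht₁pos) x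
  set A : ℝ := Real.exp (-t) with hA
  set B : ℝ := Real.exp (-t₁) with hB
  have hA0 : 0 < A := Real.exp_pos _
  have hB0 : 0 < B := Real.exp_pos _
  have hBA : B ≤ A := Real.exp_le_exp.2 (by linarith)
  have hA1 : A ≤ 1 := Real.exp_le_one_iff.2 (by linarith)
  have hB1 : B < 1 := Real.exp_lt_one_iff.2 (by linarith)
  have hAB : A - B ≤ A * h := by
    have hexp : (t - t₁) + 1 ≤ Real.exp (t - t₁) := Real.add_one_le_exp _
    have hBe : B = A * Real.exp (t - t₁) := by
      rw [hA, hB, ← Real.exp_add]; ring_nf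
    have := mul_le_mul_of_nonneg_left hexp (le_of_lt hA0)
    nlinarith
  constructor
  · -- part (i)
    rw [div_le_iff₀ hqx]
    show qone S p t y ≤ κ * qone S p t x
    unfold qone
    have hpy : p y ≤ κ * p x := by
      calc p y ≤ M := hge y
        _ = κ * m := hκm.symm
        _ ≤ κ * p x := by
          have := hle x
          nlinarith
    have h1 : (0 : ℝ) ≤ 1 - A := by linarith
    have hSinv : (0 : ℝ) ≤ 1 / (S : ℝ) := by positivity
    rw [← hA]
    have step2 : (1 - A) * (1 / S) ≤ κ * ((1 - A) * (1 / S)) :=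
      le_mul_of_one_le_left (by positivity) hκ1
    have step1 := mul_le_mul_of_nonneg_left hpy (le_of_lt hA0)
    linarith
  · -- part (ii)
    have hqlbx : A * m ≤ qone S p t x := by
      unfold qone
      rw [← hA]
      have h1 : (0 : ℝ) ≤ 1 - A := by linarith
      have h2 : (0 : ℝ) ≤ (1 - A) * (1 / S) := by positivity
      have h3 := mul_le_mul_of_nonneg_left (hle x) hA0.le
      linarith
    have hqlbx1 : (1 - B) * (1 / S) ≤ qone S p t₁ x := by
      unfold qone
      rw [← hB]
      have := mul_pos hB0 (hp x)
      linarith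
    have key : qone S p t y / qone S p t x - qone S p t₁ y / qone S p t₁ x
        = ((A - B) * (p y - p x) * (1 / S)) / (qone S p t x * qone S p t₁ x) := by
      rw [div_sub_div _ _ hqx.ne' hqx1.ne']
      congr 1
      unfold qone
      rw [← hA, ← hB]
      ring
    rw [key, abs_div, abs_of_pos (mul_pos hqx hqx1)]
    have habsnum : |(A - B) * (p y - p x) * (1 / S)| ≤ (A - B) * M * (1 / S) := by
      rw [abs_mul, abs_mul]
      have h1 : |A - B| = A - B := abs_of_nonneg (by linarith)
      have h2 : |(1 : ℝ) / S| = 1 / S := abs_of_pos (by positivity)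
      have h3 : |p y - p x| ≤ M := by
        rw [abs_sub_le_iff]
        exact ⟨by linarith [hge y, hp x], by linarith [hge x, hp y]⟩
      rw [h1, h2]
      have hAB0 : (0 : ℝ) ≤ A - B := by linarith
      have hS1 : (0 : ℝ) ≤ 1 / (S : ℝ) := by positivity
      have := mul_le_mul_of_nonneg_right (mul_le_mul_of_nonneg_left h3 hAB0) hS1
      linarith
    have hD' : (0 : ℝ) < (A * m) * ((1 - B) * (1 / S)) := by
      have : (0 : ℝ) < 1 - B := by linarith
      positivity
    have hDle : (A * m) * ((1 - B) * (1 / S)) ≤ qone S p t x * qone S p t₁ x := by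
      have h1 : (0 : ℝ) < 1 - B := by linarith
      have := mul_le_mul hqlbx hqlbx1 (by positivity) (le_of_lt hqx)
      linarith
    calc |(A - B) * (p y - p x) * (1 / S)| / (qone S p t x * qone S p t₁ x)
        ≤ ((A - B) * M * (1 / S)) / ((A * m) * ((1 - B) * (1 / S))) := by
          exact div_le_div₀ (mul_nonneg (mul_nonneg (by linarith) hM0.le) (by positivity)) habsnum hD' hDle
      _ ≤ κ * h / (1 - B) := by
          rw [div_le_div_iff₀ (by exact hD') (by linarith)]
          have hMκ : M = κ * m := hκm.symm
          have hBl : (0 : ℝ) < 1 - B := by linarith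
          have key2 : (A - B) * (κ * m) ≤ κ * h * (A * m) := by
            have hκ0 : (0 : ℝ) < κ := by linarith
            have := mul_le_mul_of_nonneg_right hAB (le_of_lt (mul_pos hκ0 hm0))
            linarith
          have hSinv : (0 : ℝ) < 1 / (S : ℝ) := by positivity
          rw [hMκ]
          have := mul_le_mul_of_nonneg_right key2 (le_of_lt (mul_pos hBl hSinv))
          linarith
end

section
/- Let n ≥ 1 be an integer, C ≥ 1 a real number, and x, y, z ∈ [1/C, C]^n. Then D_I(x‖y) ≤ C·‖x − z‖₂² + 2C²·D_I(z‖y). -/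
open scoped BigOperators

/-- The generalized I-divergence (Bregman divergence of the negative entropy)
between two strictly positive vectors. -/
noncomputable def DIvec (n : ℕ) (u v : Fin n → ℝ) : ℝ :=
  ∑ i, (-u i + v i + u i * Real.log (u i / v i))

/-- MVT helper: if `f v = 0` and `f'` is ≥0 right of `v`, ≤0 left of `v` on an interval,
then `f u ≥ 0` for `u` in the interval. -/
lemma mvt_nonneg (f f' : ℝ → ℝ) (lo hi v u : ℝ)
    (hv : v ∈ Set.Icc lo hi) (hu : u ∈ Set.Icc lo hi)
    (hd : ∀ t ∈ Set.Icc lo hi, HasDerivAt f (f' t) t)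
    (hfv : f v = 0)
    (hpos : ∀ c ∈ Set.Icc lo hi, v ≤ c → 0 ≤ f' c)
    (hneg : ∀ c ∈ Set.Icc lo hi, c ≤ v → f' c ≤ 0) :
    0 ≤ f u := by
  rcases lt_trichotomy u v with h | h | h
  · have hsub : Set.Icc u v ⊆ Set.Icc lo hi :=
      Set.Icc_subset_Icc hu.1 hv.2
    have hcont : ContinuousOn f (Set.Icc u v) := fun t ht =>
      ((hd t (hsub ht)).continuousAt).continuousWithinAt
    have hdiff : ∀ t ∈ Set.Ioo u v, HasDerivAt f (f' t) t := fun t ht =>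
      hd t (hsub (Set.mem_Icc_of_Ioo ht))
    obtain ⟨c, hc, hceq⟩ := exists_hasDerivAt_eq_slope f f' h hcont hdiff
    have hc' : f' c ≤ 0 := hneg c (hsub (Set.mem_Icc_of_Ioo hc)) hc.2.le
    have : (f v - f u) / (v - u) ≤ 0 := hceq ▸ hc'
    have hvu : 0 < v - u := by linarith
    have h2 := mul_nonpos_of_nonpos_of_nonneg this hvu.le
    rw [div_mul_cancel₀ _ hvu.ne'] at h2
    linarith
  · rw [h, hfv]
  · have hsub : Set.Icc v u ⊆ Set.Icc lo hi :=
      Set.Icc_subset_Icc hv.1 hu.2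
    have hcont : ContinuousOn f (Set.Icc v u) := fun t ht =>
      ((hd t (hsub ht)).continuousAt).continuousWithinAt
    have hdiff : ∀ t ∈ Set.Ioo v u, HasDerivAt f (f' t) t := fun t ht =>
      hd t (hsub (Set.mem_Icc_of_Ioo ht))
    obtain ⟨c, hc, hceq⟩ := exists_hasDerivAt_eq_slope f f' h hcont hdiff
    have hc' : 0 ≤ f' c := hpos c (hsub (Set.mem_Icc_of_Ioo hc)) hc.1.le
    have : 0 ≤ (f u - f v) / (u - v) := hceq ▸ hc'
    have huv : 0 < u - v := by linarith
    have h2 := mul_nonneg this huv.le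
    rw [div_mul_cancel₀ _ huv.ne'] at h2
    linarith

/-- Derivative of the one-variable Bregman divergence `u ↦ -u + v + u (log u - log v)`. -/
lemma hasDerivF (v c : ℝ) (hc : 0 < c) :
    HasDerivAt (fun u => -u + v + u * (Real.log u - Real.log v))
      (Real.log c - Real.log v) c := by
  have hlog : HasDerivAt (fun u : ℝ => Real.log u - Real.log v) c⁻¹ c :=
    (Real.hasDerivAt_log hc.ne').sub_const _
  have hmul : HasDerivAt (fun u : ℝ => u * (Real.log u - Real.log v))
      (1 * (Real.log c - Real.log v) + c * c⁻¹) c :=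
    (hasDerivAt_id c).mul hlog
  have hlin : HasDerivAt (fun u : ℝ => -u + v) (-1) c := by
    simpa using (hasDerivAt_id c).neg.add_const v
  have h := hlin.add hmul
  refine HasDerivAt.congr_deriv h ?_
  field_simp
  ring

/-- Pointwise upper bound: `D(u,v) ≤ (C/2)(u-v)²` on `[1/C, C]`. -/
lemma DI_upper (C v u : ℝ) (hC : 1 ≤ C) (hv : v ∈ Set.Icc (1/C) C)
    (hu : u ∈ Set.Icc (1/C) C) :
    -u + v + u * Real.log (u/v) ≤ C/2 * (u-v)^2 := by
  have hC0 : 0 < C := lt_of_lt_of_le one_pos hC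
  have hlo : 0 < 1/C := by positivity
  have hv0 : 0 < v := lt_of_lt_of_le hlo hv.1
  have hu0 : 0 < u := lt_of_lt_of_le hlo hu.1
  have hlog : Real.log (u/v) = Real.log u - Real.log v := Real.log_div hu0.ne' hv0.ne'
  rw [hlog]
  set H : ℝ → ℝ := fun t => C/2 * (t - v)^2 - (-t + v + t * (Real.log t - Real.log v)) with hH
  set H' : ℝ → ℝ := fun t => C * (t - v) - (Real.log t - Real.log v) with hH'
  have key : 0 ≤ H u := by
    apply mvt_nonneg H H' (1/C) C v u hv hu
    · intro t ht
      have ht0 : 0 < t := lt_of_lt_of_le hlo ht.1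
      have h1 : HasDerivAt (fun t : ℝ => C/2 * (t - v)^2) (C/2 * (2 * (t - v))) t := by
        have := (((hasDerivAt_id t).sub_const v).pow 2).const_mul (C/2)
        simpa using this
      have h2 := hasDerivF v t ht0
      have := h1.sub h2
      refine HasDerivAt.congr_deriv this ?_
      ring
    · simp [hH]
    · intro c hc hvc
      have hc0 : 0 < c := lt_of_lt_of_le hlo hc.1
      have hlb : Real.log c - Real.log v ≤ (c - v)/v := by
        have := Real.log_le_sub_one_of_pos (div_pos hc0 hv0)
        rw [Real.log_div hc0.ne' hv0.ne'] at this
        have : Real.log c - Real.log v ≤ c/v - 1 := this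
        rw [div_sub_one hv0.ne'] at this
        exact this
      have hCv : 1 ≤ C * v := by
        have h1v := hv.1
        rw [div_le_iff₀ hC0] at h1v
        nlinarith
      have h1 : (c - v)/v ≤ C * (c - v) := by
        rw [div_le_iff₀ hv0]
        nlinarith [mul_nonneg (sub_nonneg.2 hvc) (by linarith : (0:ℝ) ≤ C * v - 1)]
      simp only [hH']
      linarith
    · intro c hc hcv
      have hc0 : 0 < c := lt_of_lt_of_le hlo hc.1
      have hlb : (v - c)/c ≥ Real.log v - Real.log c := by
        have := Real.log_le_sub_one_of_pos (div_pos hv0 hc0)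
        rw [Real.log_div hv0.ne' hc0.ne'] at this
        rw [ge_iff_le]
        calc Real.log v - Real.log c ≤ v/c - 1 := this
          _ = (v - c)/c := by rw [div_sub_one hc0.ne']
      have hCc : 1 ≤ C * c := by
        have := hc.1
        rw [div_le_iff₀ hC0] at this
        nlinarith
      have h1 : (v - c)/c ≤ C * (v - c) := by
        rw [div_le_iff₀ hc0]
        nlinarith [mul_nonneg (sub_nonneg.2 hcv) (by linarith : (0:ℝ) ≤ C * c - 1)]
      simp only [hH']
      linarith
  simp only [hH] at key
  linarith

/-- Pointwise lower bound: `(u-v)²/(2C) ≤ D(u,v)` on `[1/C, C]`. -/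
lemma DI_lower (C v u : ℝ) (hC : 1 ≤ C) (hv : v ∈ Set.Icc (1/C) C)
    (hu : u ∈ Set.Icc (1/C) C) :
    (u-v)^2 / (2*C) ≤ -u + v + u * Real.log (u/v) := by
  have hC0 : 0 < C := lt_of_lt_of_le one_pos hC
  have hlo : 0 < 1/C := by positivity
  have hv0 : 0 < v := lt_of_lt_of_le hlo hv.1
  have hu0 : 0 < u := lt_of_lt_of_le hlo hu.1
  have hlog : Real.log (u/v) = Real.log u - Real.log v := Real.log_div hu0.ne' hv0.ne'
  rw [hlog]
  set G : ℝ → ℝ := fun t => (-t + v + t * (Real.log t - Real.log v)) - (t - v)^2/(2*C) with hG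
  set G' : ℝ → ℝ := fun t => (Real.log t - Real.log v) - (t - v)/C with hG'
  have key : 0 ≤ G u := by
    apply mvt_nonneg G G' (1/C) C v u hv hu
    · intro t ht
      have ht0 : 0 < t := lt_of_lt_of_le hlo ht.1
      have h1 : HasDerivAt (fun t : ℝ => (t - v)^2/(2*C)) (2 * (t - v)/(2*C)) t := by
        have := (((hasDerivAt_id t).sub_const v).pow 2).div_const (2*C)
        simpa using this
      have h2 := hasDerivF v t ht0
      have := h2.sub h1
      refine HasDerivAt.congr_deriv this ?_
      rw [mul_div_mul_left _ _ (two_ne_zero)]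
    · simp [hG]
    · intro c hc hvc
      have hc0 : 0 < c := lt_of_lt_of_le hlo hc.1
      have hlb : 1 - v/c ≤ Real.log c - Real.log v := by
        have := Real.log_le_sub_one_of_pos (div_pos hv0 hc0)
        rw [Real.log_div hv0.ne' hc0.ne'] at this
        linarith
      have heq : 1 - v/c = (c - v)/c := by field_simp
      have h1 : (c - v)/C ≤ 1 - v/c := by
        rw [heq]
        gcongr
        · exact hc.2
      simp only [hG']
      linarith
    · intro c hc hcv
      have hc0 : 0 < c := lt_of_lt_of_le hlo hc.1
      have hlb : Real.log c - Real.log v ≤ (c - v)/v := by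
        have := Real.log_le_sub_one_of_pos (div_pos hc0 hv0)
        rw [Real.log_div hc0.ne' hv0.ne'] at this
        calc Real.log c - Real.log v ≤ c/v - 1 := this
          _ = (c - v)/v := by rw [div_sub_one hv0.ne']
      have h1 : (c - v)/v ≤ (c - v)/C := by
        rw [div_le_div_iff₀ hv0 hC0]
        nlinarith [mul_nonpos_of_nonpos_of_nonneg (by linarith : c - v ≤ 0)
          (by linarith [hv.2] : (0:ℝ) ≤ C - v)]
      simp only [hG']
      linarith
  simp only [hG] at key
  linarith

/-- A triangle-like inequality for the generalized I-divergence on the box `[1/C, C]^n`: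
`D_I(x‖y) ≤ C·‖x − z‖₂² + 2C²·D_I(z‖y)`. -/
theorem DI_triangle_like (n : ℕ) (hn : 1 ≤ n) (C : ℝ) (hC : 1 ≤ C)
    (x y z : Fin n → ℝ)
    (hx : ∀ i, x i ∈ Set.Icc (1 / C) C)
    (hy : ∀ i, y i ∈ Set.Icc (1 / C) C)
    (hz : ∀ i, z i ∈ Set.Icc (1 / C) C) :
    DIvec n x y ≤ C * (∑ i, (x i - z i) ^ 2) + 2 * C ^ 2 * DIvec n z y := by
  have hC0 : 0 < C := lt_of_lt_of_le one_pos hC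
  have key : ∀ i, -x i + y i + x i * Real.log (x i / y i)
      ≤ C * (x i - z i) ^ 2 + 2 * C ^ 2 * (-z i + y i + z i * Real.log (z i / y i)) := by
    intro i
    have hup := DI_upper C (y i) (x i) hC (hy i) (hx i)
    have hlow := DI_lower C (y i) (z i) hC (hy i) (hz i)
    have hlow' : C * (z i - y i) ^ 2 ≤
        2 * C ^ 2 * (-z i + y i + z i * Real.log (z i / y i)) := by
      have h2 : (z i - y i) ^ 2 / (2 * C) * (2 * C ^ 2) ≤
          (-z i + y i + z i * Real.log (z i / y i)) * (2 * C ^ 2) := by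
        apply mul_le_mul_of_nonneg_right hlow
        positivity
      have h3 : (z i - y i) ^ 2 / (2 * C) * (2 * C ^ 2) = C * (z i - y i) ^ 2 := by
        field_simp
      linarith
    have htri : (x i - y i) ^ 2 ≤ 2 * (x i - z i) ^ 2 + 2 * (z i - y i) ^ 2 := by
      nlinarith [sq_nonneg (x i - z i - (z i - y i))]
    nlinarith
  calc DIvec n x y = ∑ i, (-x i + y i + x i * Real.log (x i / y i)) := rfl
    _ ≤ ∑ i, (C * (x i - z i) ^ 2 + 2 * C ^ 2 * (-z i + y i + z i * Real.log (z i / y i))) :=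
        Finset.sum_le_sum fun i _ => key i
    _ = C * (∑ i, (x i - z i) ^ 2) + 2 * C ^ 2 * DIvec n z y := by
        rw [Finset.sum_add_distrib, ← Finset.mul_sum, ← Finset.mul_sum, DIvec]
end

section
/- For every probability vector p on X and every δ ≥ 0, the total variation distance between p and exp(δQ)·p satisfies (1/2)·∑_{x∈X} | p(x) − (exp(δQ)·p)(x) | ≤ 1 − e^{−d·δ·(S−1)/S}. -/
open scoped BigOperators
open scoped Nat

section Aux

variable {S d : ℕ}

lemma ham_comm (x y : Fin d → Fin S) : Ham x y = Ham y x := by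
  unfold Ham
  congr 1
  ext i
  simp [ne_comm]

lemma ham_self (x : Fin d → Fin S) : Ham x x = 0 := by
  simp [Ham]

lemma ham_update (y : Fin d → Fin S) (i : Fin d) (s : Fin S) (hs : s ≠ y i) :
    (Finset.univ.filter fun j => Function.update y i s j ≠ y j) = {i} := by
  ext j
  rcases eq_or_ne j i with rfl | hj
  · simp [Function.update_self, hs]
  · simp [Function.update_of_ne hj, hj]

lemma ham_eq_one_iff {x y : Fin d → Fin S} :
    Ham x y = 1 ↔ ∃ i : Fin d, ∃ s : Fin S, s ≠ y i ∧ x = Function.update y i s := by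
  constructor
  · intro h
    obtain ⟨i, hi⟩ := Finset.card_eq_one.mp h
    have hxi : x i ≠ y i := by
      have : i ∈ Finset.univ.filter fun j => x j ≠ y j := by
        rw [hi]; exact Finset.mem_singleton_self i
      simpa using this
    refine ⟨i, x i, hxi, ?_⟩
    funext j
    rcases eq_or_ne j i with rfl | hj
    · simp [Function.update_self]
    · have hj' : j ∉ ({i} : Finset (Fin d)) := by simpa using hj
      rw [← hi] at hj'
      have : x j = y j := by simpa using hj'
      simp [Function.update_of_ne hj, this]
  · rintro ⟨i, s, hs, rfl⟩
    unfold Ham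
    rw [ham_update y i s hs, Finset.card_singleton]

lemma count_ham (hS : 2 ≤ S) (y : Fin d → Fin S) :
    (Finset.univ.filter fun x => Ham x y = 1).card = d * (S - 1) := by
  classical
  have hcard :
      ((Finset.univ : Finset (Fin d)).sigma fun i =>
          Finset.univ.filter (· ≠ y i)).card =
        (Finset.univ.filter fun x : Fin d → Fin S => Ham x y = 1).card := by
    refine Finset.card_bij (fun a _ => Function.update y a.1 a.2) ?_ ?_ ?_
    · rintro ⟨i, s⟩ ha
      simp only [Finset.mem_sigma, Finset.mem_filter, Finset.mem_univ, true_and] at ha ⊢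
      exact ham_eq_one_iff.mpr ⟨i, s, ha, rfl⟩
    · rintro ⟨i, s⟩ ha ⟨i', s'⟩ ha' heq
      simp only [Finset.mem_sigma, Finset.mem_filter, Finset.mem_univ, true_and] at ha ha'
      have hii : i = i' := by
        by_contra hne
        have h1 := congrFun heq i
        simp only [Function.update_apply, if_pos rfl, if_neg hne] at h1
        exact ha h1
      subst hii
      have h1 := congrFun heq i
      simp only [Function.update_apply, if_pos rfl] at h1
      subst h1
      rfl
    · intro x hx
      simp only [Finset.mem_filter, Finset.mem_univ, true_and] at hx
      obtain ⟨i, s, hs, rfl⟩ := ham_eq_one_iff.mp hx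
      exact ⟨⟨i, s⟩, by simp [hs], rfl⟩
  rw [← hcard, Finset.card_sigma]
  have : ∀ i : Fin d, (Finset.univ.filter (· ≠ y i)).card = S - 1 := by
    intro i
    rw [Finset.filter_ne', Finset.card_erase_of_mem (Finset.mem_univ _)]
    simp
  simp [this, Finset.sum_const, Finset.card_univ, Nat.mul_comm]

lemma Qmat_symm (x y : Fin d → Fin S) : Qmat S d x y = Qmat S d y x := by
  unfold Qmat
  rw [ham_comm]
  by_cases h : x = y
  · simp [h]
  · simp [h, Ne.symm h]

lemma Qmat_rowsum (hS : 2 ≤ S) (x : Fin d → Fin S) : ∑ y, Qmat S d x y = 0 := by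
  classical
  have hS0 : (S : ℝ) ≠ 0 := by positivity
  rw [← Finset.add_sum_erase _ _ (Finset.mem_univ x)]
  have h1 : ∀ y ∈ Finset.univ.erase x,
      Qmat S d x y = if Ham x y = 1 then (1 / (S : ℝ)) else 0 := by
    intro y hy
    have : x ≠ y := (Finset.ne_of_mem_erase hy).symm
    simp [Qmat, this]
  rw [Finset.sum_congr rfl h1]
  have h2 : ∑ y ∈ Finset.univ.erase x, (if Ham x y = 1 then (1 / (S : ℝ)) else 0) =
      ∑ y, (if Ham x y = 1 then (1 / (S : ℝ)) else 0) := by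
    apply Finset.sum_erase
    simp [ham_self]
  rw [h2, ← Finset.sum_filter]
  have hfe : (Finset.univ.filter fun y => Ham x y = 1) =
      (Finset.univ.filter fun y => Ham y x = 1) := by
    apply Finset.filter_congr
    intro y _
    rw [ham_comm]
  rw [hfe, Finset.sum_const, count_ham hS x]
  have hS1 : ((S - 1 : ℕ) : ℝ) = (S : ℝ) - 1 := by
    have : (1 : ℕ) ≤ S := by omega
    push_cast [Nat.cast_sub this]
    ring
  rw [nsmul_eq_mul]
  simp only [Qmat, if_pos rfl]
  push_cast [hS1]
  field_simp
  ring

/-- finite sums of `HasSum`. -/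
lemma hasSum_finset_sum {κ : Type*} (s : Finset κ) (f : κ → ℕ → ℝ) (a : κ → ℝ)
    (h : ∀ x ∈ s, HasSum (f x) (a x)) :
    HasSum (fun k => ∑ x ∈ s, f x k) (∑ x ∈ s, a x) := by
  classical
  induction s using Finset.induction with
  | empty => simpa using hasSum_zero
  | insert _ _ hx ih =>
    rename_i b t
    simp only [Finset.sum_insert hx]
    exact (h _ (Finset.mem_insert_self _ _)).add
      (ih fun x hxt => h x (Finset.mem_insert_of_mem hxt))

/-- entrywise `HasSum` for the matrix exponential series. -/
lemma exp_entry_hasSum {ι : Type*} [Fintype ι] [DecidableEq ι]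
    (M : Matrix ι ι ℝ) (x y : ι) :
    HasSum (fun k : ℕ => ((k ! : ℝ)⁻¹) * (M ^ k) x y)
      (NormedSpace.exp M x y) := by
  letI : SeminormedRing (Matrix ι ι ℝ) := Matrix.linftyOpSemiNormedRing
  letI : NormedRing (Matrix ι ι ℝ) := Matrix.linftyOpNormedRing
  letI : NormedAlgebra ℝ (Matrix ι ι ℝ) := Matrix.linftyOpNormedAlgebra
  have h : HasSum (fun k : ℕ => ((k ! : ℝ)⁻¹) • M ^ k) (NormedSpace.exp M) :=
    NormedSpace.exp_series_hasSum_exp' M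
  have hx := Pi.hasSum.mp h x
  have hxy := Pi.hasSum.mp hx y
  simpa [Matrix.smul_apply, smul_eq_mul] using hxy

end Aux

/-- Total variation bound between `p` and `exp(δQ)·p`:
`D_TV(p, exp(δQ)·p) ≤ 1 − e^{−d·δ·(S−1)/S}`. -/
theorem tv_short_time (S d : ℕ) (hS : 2 ≤ S) (hd : 1 ≤ d)
    (p : (Fin d → Fin S) → ℝ) (hp : ∀ x, 0 ≤ p x) (hp1 : ∑ x, p x = 1)
    (δ : ℝ) (hδ : 0 ≤ δ) :
    (1 / 2) * ∑ x : Fin d → Fin S,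
        |p x - (NormedSpace.exp (δ • Qmat S d)).mulVec p x| ≤
      1 - Real.exp (-(d * δ * ((S : ℝ) - 1) / S)) := by
  classical
  set c : ℝ := (d : ℝ) * ((S : ℝ) - 1) / (S : ℝ) with hc
  have hS0 : (S : ℝ) ≠ 0 := by positivity
  have hc0 : 0 ≤ c := by
    have h1 : (1 : ℝ) ≤ (S : ℝ) := by exact_mod_cast (by omega : 1 ≤ S)
    have : (0:ℝ) ≤ (S:ℝ) - 1 := by linarith
    positivity
  set Qm : Matrix (Fin d → Fin S) (Fin d → Fin S) ℝ := Qmat S d with hQm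
  set B : Matrix (Fin d → Fin S) (Fin d → Fin S) ℝ := δ • Qm + (δ * c) • 1 with hB
  -- entries of B are nonnegative
  have hBnn : ∀ x y, 0 ≤ B x y := by
    intro x y
    by_cases hxy : x = y
    · subst hxy
      have : Qm x x = -c := by
        simp only [hQm, Qmat, if_pos rfl, hc, ↓reduceIte]
        field_simp
        ring
      simp [hB, Matrix.add_apply, Matrix.smul_apply, Matrix.one_apply, this, smul_eq_mul]
    · have : 0 ≤ Qm x y := by
        simp only [hQm, Qmat, if_neg hxy]
        split <;> positivity
      simp [hB, Matrix.add_apply, Matrix.smul_apply, Matrix.one_apply, hxy, smul_eq_mul]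
      positivity
  have hBpow : ∀ (k : ℕ) (x y : _), 0 ≤ (B ^ k) x y := by
    intro k
    induction k with
    | zero => intro x y; simp [Matrix.one_apply]; split <;> norm_num
    | succ k ih =>
      intro x y
      rw [pow_succ]
      rw [Matrix.mul_apply]
      exact Finset.sum_nonneg fun z _ => mul_nonneg (ih x z) (hBnn z y)
  set E : Matrix (Fin d → Fin S) (Fin d → Fin S) ℝ := NormedSpace.exp B with hE
  have hE0 : ∀ x y, 0 ≤ E x y := by
    intro x y
    have h := exp_entry_hasSum B x y
    exact h.nonneg fun k => mul_nonneg (by positivity) (hBpow k x y)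
  have hE1 : ∀ x, 1 ≤ E x x := by
    intro x
    have h := exp_entry_hasSum B x x
    have h0 : ((0 ! : ℝ)⁻¹) * (B ^ 0) x x = 1 := by simp [Matrix.one_apply]
    calc (1:ℝ) = ((0 ! : ℝ)⁻¹) * (B ^ 0) x x := h0.symm
      _ ≤ E x x := le_hasSum h 0 fun k _ => mul_nonneg (by positivity) (hBpow k x x)
  -- split the exponential
  set M : Matrix (Fin d → Fin S) (Fin d → Fin S) ℝ := NormedSpace.exp (δ • Qm) with hM
  have hsplit : M = Real.exp (-(δ * c)) • E := by
    have hcomm : Commute B ((-(δ * c)) • (1 : Matrix (Fin d → Fin S) (Fin d → Fin S) ℝ)) :=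
      (Commute.one_right B).smul_right _
    have hdecomp : δ • Qm = B + (-(δ * c)) • (1 : Matrix (Fin d → Fin S) (Fin d → Fin S) ℝ) := by
      rw [hB]
      rw [add_assoc, ← add_smul]
      simp
    rw [hM, hdecomp, Matrix.exp_add_of_commute _ _ hcomm]
    have hone : NormedSpace.exp ((-(δ * c)) • (1 : Matrix (Fin d → Fin S) (Fin d → Fin S) ℝ)) =
        Real.exp (-(δ * c)) • (1 : Matrix (Fin d → Fin S) (Fin d → Fin S) ℝ) := by
      rw [Matrix.smul_one_eq_diagonal, Matrix.exp_diagonal]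
      have : NormedSpace.exp (fun _ : Fin d → Fin S => -(δ * c)) =
          fun _ : Fin d → Fin S => Real.exp (-(δ * c)) := by
        funext i
        rw [Pi.coe_exp, Real.exp_eq_exp_ℝ]
      rw [this, ← Matrix.smul_one_eq_diagonal]
    rw [hone]
    rw [Matrix.mul_smul, Matrix.mul_one, hE]
  have hM0 : ∀ x y, 0 ≤ M x y := by
    intro x y
    rw [hsplit]
    simp only [Matrix.smul_apply, smul_eq_mul]
    exact mul_nonneg (Real.exp_pos _).le (hE0 x y)
  have hMd : ∀ x, Real.exp (-(δ * c)) ≤ M x x := by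
    intro x
    rw [hsplit]
    simp only [Matrix.smul_apply, smul_eq_mul]
    nlinarith [hE1 x, Real.exp_pos (-(δ * c))]
  -- column sums of M are 1
  have hQcol : ∀ z, ∑ x, (δ • Qm) x z = 0 := by
    intro z
    have : ∑ x, Qm x z = 0 := by
      have := Qmat_rowsum hS z
      rw [← this]
      exact Finset.sum_congr rfl fun x _ => Qmat_symm x z
    simp [Matrix.smul_apply, ← Finset.mul_sum, this]
  have hpowcol : ∀ (k : ℕ) (y : _), ∑ x, ((δ • Qm) ^ k) x y = if k = 0 then (1:ℝ) else 0 := by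
    intro k
    induction k with
    | zero => intro y; simp [Matrix.one_apply, Finset.sum_ite_eq]
    | succ k ih =>
      intro y
      rw [pow_succ']
      have heq1 : ∀ x : Fin d → Fin S, ((δ • Qm) * ((δ • Qm) ^ k)) x y =
          ∑ z, (δ • Qm) x z * ((δ • Qm) ^ k) z y := fun x => Matrix.mul_apply
      rw [Finset.sum_congr rfl fun x _ => heq1 x, Finset.sum_comm]
      have heq2 : ∀ z : Fin d → Fin S, ∑ x, (δ • Qm) x z * ((δ • Qm) ^ k) z y =
          (∑ x, (δ • Qm) x z) * ((δ • Qm) ^ k) z y := fun z => (Finset.sum_mul _ _ _).symm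
      rw [Finset.sum_congr rfl fun z _ => heq2 z]
      have heq3 : ∀ z : Fin d → Fin S, (∑ x, (δ • Qm) x z) * ((δ • Qm) ^ k) z y = 0 :=
        fun z => by rw [hQcol z, zero_mul]
      rw [Finset.sum_congr rfl fun z _ => heq3 z]
      simp
  have hcol : ∀ y, ∑ x, M x y = 1 := by
    intro y
    have hsum : HasSum (fun k : ℕ => ∑ x, ((k ! : ℝ)⁻¹) * (((δ • Qm) ^ k) x y)) (∑ x, M x y) :=
      hasSum_finset_sum Finset.univ _ _ fun x _ => exp_entry_hasSum (δ • Qm) x y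
    have hfun : (fun k : ℕ => ∑ x, ((k ! : ℝ)⁻¹) * (((δ • Qm) ^ k) x y)) =
        fun k : ℕ => if k = 0 then (1:ℝ) else 0 := by
      funext k
      rw [← Finset.mul_sum, hpowcol k y]
      cases k with
      | zero => simp
      | succ k => simp
    rw [hfun] at hsum
    exact hsum.unique (hasSum_ite_eq 0 1)
  have hMle1 : ∀ x, M x x ≤ 1 := by
    intro x
    rw [← hcol x]
    exact Finset.single_le_sum (f := fun z => M z x) (fun z _ => hM0 z x) (Finset.mem_univ x)
  -- pointwise bound
  have hmv : ∀ x, M.mulVec p x = ∑ y, M x y * p y := by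
    intro x
    simp [Matrix.mulVec, dotProduct]
  have key : ∀ x, |p x - M.mulVec p x| ≤ p x + M.mulVec p x - 2 * (M x x * p x) := by
    intro x
    have ha : M x x * p x ≤ p x := by
      calc M x x * p x ≤ 1 * p x := mul_le_mul_of_nonneg_right (hMle1 x) (hp x)
        _ = p x := one_mul _
    have hb : 0 ≤ ∑ y ∈ Finset.univ.erase x, M x y * p y :=
      Finset.sum_nonneg fun y _ => mul_nonneg (hM0 x y) (hp y)
    have hsplit2 : M.mulVec p x = M x x * p x + ∑ y ∈ Finset.univ.erase x, M x y * p y := by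
      rw [hmv, ← Finset.add_sum_erase _ _ (Finset.mem_univ x)]
    rw [hsplit2]
    apply abs_le.mpr
    constructor <;> nlinarith [hp x]
  -- sum the bound
  have hsum1 : ∑ x, M.mulVec p x = 1 := by
    have : ∑ x, M.mulVec p x = ∑ y, (∑ x, M x y) * p y := by
      simp only [hmv]
      rw [Finset.sum_comm]
      simp [Finset.sum_mul]
    rw [this]
    simp only [hcol, one_mul]
    exact hp1
  have hsum2 : Real.exp (-(δ * c)) ≤ ∑ x, M x x * p x := by
    calc Real.exp (-(δ * c)) = ∑ x, Real.exp (-(δ * c)) * p x := by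
          rw [← Finset.mul_sum, hp1, mul_one]
      _ ≤ ∑ x, M x x * p x :=
          Finset.sum_le_sum fun x _ => mul_le_mul_of_nonneg_right (hMd x) (hp x)
  have htotal : ∑ x, |p x - M.mulVec p x| ≤ 2 - 2 * Real.exp (-(δ * c)) := by
    calc ∑ x, |p x - M.mulVec p x|
        ≤ ∑ x, (p x + M.mulVec p x - 2 * (M x x * p x)) := Finset.sum_le_sum fun x _ => key x
      _ = (∑ x, p x) + (∑ x, M.mulVec p x) - 2 * ∑ x, M x x * p x := by
          rw [Finset.sum_sub_distrib, Finset.sum_add_distrib, Finset.mul_sum]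
      _ = 2 - 2 * ∑ x, M x x * p x := by rw [hp1, hsum1]; ring
      _ ≤ 2 - 2 * Real.exp (-(δ * c)) := by linarith
  have hexp : -(δ * c) = -((d : ℝ) * δ * ((S : ℝ) - 1) / (S : ℝ)) := by
    rw [hc]; ring
  rw [← hexp]
  linarith [htotal]
end
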